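/- arXiv:2210.16655 — 3 statements merged into one kernel-verified Lean document; each statement's English description precedes it below -/
import Mathlib

section
/- Let (X,Y) be a random vector on ℝ² whose law has a jointly continuous, strictly positive probability density function f. Suppose that for every choice of quantile splits 0 < p₁ < q₁ < 1 and 0 < p₂ < q₂ < 1, the conditional covariance Cov_A[X,Y] on the corresponding quantile set A equals 0. Then for all real numbers x₁, x₂, y₁, y₂ one has f(x₁,y₁)·f(x₂,y₂) = f(x₁,y₂)·f(x₂,y₁). -/
/-!
Write `M(R) = ∫_R f · (1, x, y, xy)` for the moment vector of a rectangle `R`. The marginal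
CDFs are strictly increasing, so the quantile set of `R` is the event `(X, Y) ∈ R`, and the
vanishing conditional covariance there says that the quadratic form
`q(M) = M_{xy} M_1 - M_x M_y` vanishes on every `M(R)`. Since `M` is additive in each side of
the rectangle, polarizing first in `x` and then in `y` gives
`b(M(I × J), M(I' × J')) + b(M(I × J'), M(I' × J)) = 0` for the polar form `b` of `q`.
Shrinking the four rectangles to points, `M(R) / |R| → f(p) (1, x, y, xy)`, and the identity
becomes `(x₁ - x₂)(y₁ - y₂)(f(x₁,y₁) f(x₂,y₂) - f(x₁,y₂) f(x₂,y₁)) = 0`.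
-/

open MeasureTheory ProbabilityTheory Set

/-- Conditional covariance of `X` and `Y` given the event `A`:
`Cov_A[X,Y] = E[X·Y | A] − E[X | A] · E[Y | A]`, where `E[· | A]` is the expectation
with respect to the conditional probability `P[|A]`. -/
noncomputable def condCov {Ω : Type*} [MeasurableSpace Ω] (P : Measure Ω) (A : Set Ω)
    (X Y : Ω → ℝ) : ℝ :=
  (∫ ω, X ω * Y ω ∂(P[|A])) - (∫ ω, X ω ∂(P[|A])) * (∫ ω, Y ω ∂(P[|A]))

/-- The cumulative distribution function of a real random variable `X` under `P`. -/
noncomputable def cdfOf {Ω : Type*} [MeasurableSpace Ω] (P : Measure Ω) (X : Ω → ℝ) : ℝ → ℝ :=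
  fun x => (P {ω | X ω ≤ x}).toReal

/-- The quantile function of `X` under `P`, i.e. the inverse of its CDF
(well defined on `(0,1)` when the CDF is a bijection onto `(0,1)`). -/
noncomputable def quantileOf {Ω : Type*} [MeasurableSpace Ω] (P : Measure Ω) (X : Ω → ℝ) : ℝ → ℝ :=
  Function.invFun (cdfOf P X)

/-- The quantile set `A = {Q_X(p₁) ≤ X ≤ Q_X(q₁)} ∩ {Q_Y(p₂) ≤ Y ≤ Q_Y(q₂)}`
associated with the quantile splits `p₁ < q₁` and `p₂ < q₂`. -/
noncomputable def quantileSet {Ω : Type*} [MeasurableSpace Ω] (P : Measure Ω) (X Y : Ω → ℝ)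
    (p₁ q₁ p₂ q₂ : ℝ) : Set Ω :=
  {ω | quantileOf P X p₁ ≤ X ω ∧ X ω ≤ quantileOf P X q₁} ∩
    {ω | quantileOf P Y p₂ ≤ Y ω ∧ Y ω ≤ quantileOf P Y q₂}

open scoped ENNReal
open Filter Topology

def mixedDiff {ι G : Type*} [AddCommGroup G] (ψ : ι → ι → G) (a b a' b' : ι) : G :=
  ψ b b' - ψ a b' - ψ b a' + ψ a a'

theorem mixedDiff_add_mixedDiff_eq_zero {ι G : Type*} [AddCommGroup G] {ψ : ι → ι → G}
    (h : ∀ u v, mixedDiff ψ u v u v = 0) (a b a' b' : ι) :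
    mixedDiff ψ a b a' b' + mixedDiff ψ a' b' a b = 0 :=
  calc mixedDiff ψ a b a' b' + mixedDiff ψ a' b' a b
      = mixedDiff ψ a b' a b' + mixedDiff ψ b a' b a' - mixedDiff ψ b b' b b'
          - mixedDiff ψ a a' a a' := by simp only [mixedDiff]; abel
    _ = 0 := by simp only [h, sub_zero, add_zero]

theorem mixedDiff_bilin {ι E F G : Type*} [NormedAddCommGroup E] [NormedSpace ℝ E]
    [NormedAddCommGroup F] [NormedSpace ℝ F] [NormedAddCommGroup G] [NormedSpace ℝ G]
    (β : E →L[ℝ] F →L[ℝ] G) (g : ι → E) (h : ι → F) (a b a' b' : ι) :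
    mixedDiff (fun u v => β (g u) (h v)) a b a' b' = β (g b - g a) (h b' - h a') := by
  simp only [mixedDiff, map_sub, sub_apply]
  abel

section RectIntegral

variable {E : Type*} [NormedAddCommGroup E] [NormedSpace ℝ E] {F : ℝ × ℝ → E}

noncomputable def rectIntegral (F : ℝ × ℝ → E) (a b c d : ℝ) : E :=
  ∫ s in a..b, ∫ t in c..d, F (s, t)

theorem continuous_intervalIntegral_slice (hF : Continuous F) (c d : ℝ) :
    Continuous fun s => ∫ t in c..d, F (s, t) :=
  intervalIntegral.continuous_parametric_intervalIntegral_of_continuous' (f := fun s t => F (s, t))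
    hF c d

theorem rectIntegral_sub_rectIntegral_left (hF : Continuous F) (e a b c d : ℝ) :
    rectIntegral F e b c d - rectIntegral F e a c d = rectIntegral F a b c d :=
  intervalIntegral.integral_interval_sub_left
    ((continuous_intervalIntegral_slice hF c d).intervalIntegrable _ _)
    ((continuous_intervalIntegral_slice hF c d).intervalIntegrable _ _)

theorem rectIntegral_sub_rectIntegral_right (hF : Continuous F) (a b e c d : ℝ) :
    rectIntegral F a b e d - rectIntegral F a b e c = rectIntegral F a b c d := by
  have hslice (s : ℝ) : Continuous fun t => F (s, t) := hF.comp (Continuous.prodMk_right s)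
  rw [rectIntegral, rectIntegral, ← intervalIntegral.integral_sub
    ((continuous_intervalIntegral_slice hF e d).intervalIntegrable _ _)
    ((continuous_intervalIntegral_slice hF e c).intervalIntegrable _ _)]
  exact intervalIntegral.integral_congr fun s _ => intervalIntegral.integral_interval_sub_left
    ((hslice s).intervalIntegrable _ _) ((hslice s).intervalIntegrable _ _)

theorem rectIntegral_swap_left (F : ℝ × ℝ → E) (a b c d : ℝ) :
    rectIntegral F b a c d = -rectIntegral F a b c d :=
  intervalIntegral.integral_symm a b

theorem rectIntegral_swap_right (F : ℝ × ℝ → E) (a b c d : ℝ) :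
    rectIntegral F a b d c = -rectIntegral F a b c d := by
  simp only [rectIntegral, intervalIntegral.integral_symm c d, intervalIntegral.integral_neg]

theorem rectIntegral_sub_const [CompleteSpace E] (hF : Continuous F) (v : E) (a b c d : ℝ) :
    rectIntegral (fun p => F p - v) a b c d = rectIntegral F a b c d - ((b - a) * (d - c)) • v := by
  have hinner (s : ℝ) : ∫ t in c..d, (F (s, t) - v) = (∫ t in c..d, F (s, t)) - (d - c) • v := by
    have hslice : Continuous fun t => F (s, t) := hF.comp (Continuous.prodMk_right s)
    rw [intervalIntegral.integral_sub (hslice.intervalIntegrable c d) intervalIntegrable_const,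
      intervalIntegral.integral_const]
  simp only [rectIntegral, hinner]
  rw [intervalIntegral.integral_sub
    ((continuous_intervalIntegral_slice hF c d).intervalIntegrable _ _) intervalIntegrable_const,
    intervalIntegral.integral_const, smul_smul]

theorem norm_rectIntegral_le {C : ℝ} {a b c d : ℝ}
    (h : ∀ s ∈ uIoc a b, ∀ t ∈ uIoc c d, ‖F (s, t)‖ ≤ C) :
    ‖rectIntegral F a b c d‖ ≤ C * |d - c| * |b - a| :=
  intervalIntegral.norm_integral_le_of_norm_le_const fun s hs =>
    intervalIntegral.norm_integral_le_of_norm_le_const fun t ht => h s hs t ht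

theorem tendsto_smul_rectIntegral_square [CompleteSpace E] (hF : Continuous F) (x y : ℝ) :
    Tendsto (fun ε => (ε * ε)⁻¹ • rectIntegral F x (x + ε) y (y + ε)) (𝓝[>] 0)
      (𝓝 (F (x, y))) := by
  rw [Metric.tendsto_nhdsWithin_nhds]
  intro δ hδ
  obtain ⟨r, hr, hball⟩ := Metric.continuous_iff.1 hF (x, y) (δ / 2) (half_pos hδ)
  refine ⟨r, hr, fun ε (hε : 0 < ε) hεr => ?_⟩
  rw [Real.dist_0_eq_abs, abs_of_pos hε] at hεr
  have hclose : ∀ s ∈ uIoc x (x + ε), ∀ t ∈ uIoc y (y + ε), ‖F (s, t) - F (x, y)‖ ≤ δ / 2 := by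
    intro s hs t ht
    rw [uIoc_of_le (by linarith)] at hs ht
    rw [← dist_eq_norm]
    refine (hball _ ?_).le
    simp only [Prod.dist_eq, Real.dist_eq, max_lt_iff, abs_lt]
    constructor <;> constructor <;> linarith [hs.1, hs.2, ht.1, ht.2]
  have hbound := norm_rectIntegral_le (F := fun p => F p - F (x, y)) hclose
  rw [rectIntegral_sub_const hF, add_sub_cancel_left, add_sub_cancel_left, abs_of_pos hε] at hbound
  have hεε : 0 < ε * ε := mul_pos hε hε
  calc dist ((ε * ε)⁻¹ • rectIntegral F x (x + ε) y (y + ε)) (F (x, y))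
      = (ε * ε)⁻¹ * ‖rectIntegral F x (x + ε) y (y + ε) - (ε * ε) • F (x, y)‖ := by
        rw [dist_eq_norm, ← norm_smul_of_nonneg (inv_nonneg.2 hεε.le), smul_sub, smul_smul,
          inv_mul_cancel₀ hεε.ne', one_smul]
    _ ≤ (ε * ε)⁻¹ * (δ / 2 * ε * ε) := by gcongr
    _ = δ / 2 := by field_simp
    _ < δ := half_lt_self hδ

theorem bilin_rectIntegral_self_eq_zero {G : Type*} [NormedAddCommGroup G] [NormedSpace ℝ G]
    (β : E →L[ℝ] E →L[ℝ] G)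
    (h : ∀ a b c d, a < b → c < d → β (rectIntegral F a b c d) (rectIntegral F a b c d) = 0)
    (a b c d : ℝ) : β (rectIntegral F a b c d) (rectIntegral F a b c d) = 0 := by
  have hleft : ∀ a b c d, c < d → β (rectIntegral F a b c d) (rectIntegral F a b c d) = 0 := by
    intro a b c d hcd
    rcases lt_trichotomy a b with hab | rfl | hab
    · exact h a b c d hab hcd
    · simp [rectIntegral]
    · simp only [rectIntegral_swap_left F b a, map_neg, neg_apply, neg_neg]
      exact h b a c d hab hcd
  rcases lt_trichotomy c d with hcd | rfl | hcd
  · exact hleft a b c d hcd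
  · simp [rectIntegral]
  · simp only [rectIntegral_swap_right F a b d c, map_neg, neg_apply, neg_neg]
    exact hleft a b d c hcd

variable {G : Type*} [NormedAddCommGroup G] [NormedSpace ℝ G]

theorem add_flip_rectIntegral_cross_eq_zero (hF : Continuous F) (β : E →L[ℝ] E →L[ℝ] G)
    (h : ∀ a b c d, a < b → c < d → β (rectIntegral F a b c d) (rectIntegral F a b c d) = 0)
    (a b a' b' c d c' d' : ℝ) :
    (β + β.flip) (rectIntegral F a b c d) (rectIntegral F a' b' c' d')
      + (β + β.flip) (rectIntegral F a b c' d') (rectIntegral F a' b' c d) = 0 := by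
  set γ := β + β.flip
  have hsameY (a b a' b' c d : ℝ) :
      γ (rectIntegral F a b c d) (rectIntegral F a' b' c d) = 0 := by
    have hpol := mixedDiff_add_mixedDiff_eq_zero
      (ψ := fun u v => β (rectIntegral F 0 u c d) (rectIntegral F 0 v c d))
      (fun u v => by
        rw [mixedDiff_bilin, rectIntegral_sub_rectIntegral_left hF,
          bilin_rectIntegral_self_eq_zero β h])
      a b a' b'
    rw [mixedDiff_bilin, mixedDiff_bilin, rectIntegral_sub_rectIntegral_left hF,
      rectIntegral_sub_rectIntegral_left hF] at hpol
    simpa [γ] using hpol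
  have hpol := mixedDiff_add_mixedDiff_eq_zero
    (ψ := fun u v => γ (rectIntegral F a b 0 u) (rectIntegral F a' b' 0 v))
    (fun u v => by rw [mixedDiff_bilin, rectIntegral_sub_rectIntegral_right hF,
      rectIntegral_sub_rectIntegral_right hF, hsameY]) c d c' d'
  rwa [mixedDiff_bilin, mixedDiff_bilin, rectIntegral_sub_rectIntegral_right hF,
    rectIntegral_sub_rectIntegral_right hF, rectIntegral_sub_rectIntegral_right hF,
    rectIntegral_sub_rectIntegral_right hF] at hpol

theorem add_flip_cross_eq_zero_of_rectIntegral [CompleteSpace E] (hF : Continuous F)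
    (β : E →L[ℝ] E →L[ℝ] G)
    (h : ∀ a b c d, a < b → c < d → β (rectIntegral F a b c d) (rectIntegral F a b c d) = 0)
    (x₁ x₂ y₁ y₂ : ℝ) :
    (β + β.flip) (F (x₁, y₁)) (F (x₂, y₂)) + (β + β.flip) (F (x₁, y₂)) (F (x₂, y₁)) = 0 := by
  set M : ℝ → ℝ → ℝ → E := fun x y ε => (ε * ε)⁻¹ • rectIntegral F x (x + ε) y (y + ε)
  have hlim (x y x' y' : ℝ) : Tendsto (fun ε => (β + β.flip) (M x y ε) (M x' y' ε)) (𝓝[>] 0)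
      (𝓝 ((β + β.flip) (F (x, y)) (F (x', y')))) :=
    ((β + β.flip).continuous₂.tendsto _).comp ((tendsto_smul_rectIntegral_square hF x y).prodMk_nhds
      (tendsto_smul_rectIntegral_square hF x' y'))
  have hzero (ε : ℝ) :
      (β + β.flip) (M x₁ y₁ ε) (M x₂ y₂ ε) + (β + β.flip) (M x₁ y₂ ε) (M x₂ y₁ ε) = 0 := by
    simp only [M, map_smul, smul_apply, ← smul_add,
      add_flip_rectIntegral_cross_eq_zero hF β h, smul_zero]
  exact tendsto_nhds_unique ((hlim ..).add (hlim ..))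
    (by simpa only [hzero] using tendsto_const_nhds)

end RectIntegral

theorem isOpenPosMeasure_withDensity {α : Type*} [TopologicalSpace α] [MeasurableSpace α]
    {μ : Measure α} [μ.IsOpenPosMeasure] {g : α → ℝ≥0∞} (hg : AEMeasurable g μ)
    (hg_pos : ∀ x, g x ≠ 0) : (μ.withDensity g).IsOpenPosMeasure where
  open_pos U hU hne := by
    rw [Ne, withDensity_apply_eq_zero' hg]
    simpa [hg_pos] using hU.measure_ne_zero μ hne

section CDF

variable {Ω : Type*} [MeasurableSpace Ω] {P : Measure Ω} {Z : Ω → ℝ}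

theorem cdfOf_eq_measureReal_map (hZ : Measurable Z) (x : ℝ) :
    cdfOf P Z x = (P.map Z).real (Iic x) := by
  rw [map_measureReal_apply hZ measurableSet_Iic]
  rfl

theorem cdfOf_strictMono [IsFiniteMeasure P] (hZ : Measurable Z) [(P.map Z).IsOpenPosMeasure] :
    StrictMono (cdfOf P Z) := by
  intro u v huv
  rw [cdfOf_eq_measureReal_map hZ, cdfOf_eq_measureReal_map hZ, ← sub_pos,
    ← measureReal_sdiff (Iic_subset_Iic.2 huv.le) measurableSet_Iic, Iic_sdiff_Iic]
  exact ENNReal.toReal_pos ((isOpen_Ioo.measure_pos _ (nonempty_Ioo.2 huv)).trans_le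
    (measure_mono Ioo_subset_Ioc_self)).ne' (measure_ne_top _ _)

theorem cdfOf_mem_Ioo [IsProbabilityMeasure P] (hZ : Measurable Z) [(P.map Z).IsOpenPosMeasure]
    (x : ℝ) : cdfOf P Z x ∈ Ioo 0 1 := by
  have : IsProbabilityMeasure (P.map Z) := Measure.isProbabilityMeasure_map hZ.aemeasurable
  refine ⟨?_, (cdfOf_strictMono hZ (lt_add_one x)).trans_le ?_⟩
  · rw [cdfOf_eq_measureReal_map hZ]
    exact ENNReal.toReal_pos ((isOpen_Iio.measure_pos _ nonempty_Iio).trans_le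
      (measure_mono Iio_subset_Iic_self)).ne' (measure_ne_top _ _)
  · rw [cdfOf_eq_measureReal_map hZ]
    exact measureReal_le_one

theorem quantileOf_cdfOf (h : Function.Injective (cdfOf P Z)) (x : ℝ) :
    quantileOf P Z (cdfOf P Z x) = x :=
  Function.leftInverse_invFun h x

end CDF

theorem quantileSet_cdfOf {Ω : Type*} [MeasurableSpace Ω] {P : Measure Ω} {X Y : Ω → ℝ}
    (hX : Function.Injective (cdfOf P X)) (hY : Function.Injective (cdfOf P Y)) (a b c d : ℝ) :
    quantileSet P X Y (cdfOf P X a) (cdfOf P X b) (cdfOf P Y c) (cdfOf P Y d) =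
      (fun ω => (X ω, Y ω)) ⁻¹' (Icc a b ×ˢ Icc c d) := by
  simp only [quantileSet, quantileOf_cdfOf hX, quantileOf_cdfOf hY]
  rfl

section CondCov

variable {Ω : Type*} [MeasurableSpace Ω] {P : Measure Ω}

theorem cond_map {β : Type*} [MeasurableSpace β] {Z : Ω → β} (hZ : Measurable Z) {S : Set β}
    (hS : MeasurableSet S) : (P.map Z)[|S] = (P[|Z ⁻¹' S]).map Z := by
  rw [ProbabilityTheory.cond, ProbabilityTheory.cond, Measure.map_smul,
    ← Measure.restrict_map hZ hS, Measure.map_apply hZ hS]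

theorem condCov_map {β : Type*} [MeasurableSpace β] {Z : Ω → β} (hZ : Measurable Z) {S : Set β}
    (hS : MeasurableSet S) {U V : β → ℝ} (hU : Measurable U) (hV : Measurable V) :
    condCov (P.map Z) S U V = condCov P (Z ⁻¹' S) (fun ω => U (Z ω)) (fun ω => V (Z ω)) := by
  simp only [condCov, cond_map hZ hS]
  rw [integral_map (f := fun p => U p * V p) hZ.aemeasurable (hU.mul hV).aestronglyMeasurable,
    integral_map hZ.aemeasurable hU.aestronglyMeasurable,
    integral_map hZ.aemeasurable hV.aestronglyMeasurable]

-- Cleared of the denominators `P.real S`, so that it also holds when `P S = 0`.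
theorem measureReal_sq_mul_condCov [IsFiniteMeasure P] (S : Set Ω) (X Y : Ω → ℝ) :
    P.real S ^ 2 * condCov P S X Y =
      P.real S * (∫ ω in S, X ω * Y ω ∂P) - (∫ ω in S, X ω ∂P) * ∫ ω in S, Y ω ∂P := by
  rcases eq_or_ne (P S) 0 with hS | hS
  · simp [measureReal_def, hS, Measure.restrict_eq_zero.2 hS]
  have hS' : P.real S ≠ 0 := (ENNReal.toReal_pos hS (measure_ne_top _ _)).ne'
  simp only [condCov, ProbabilityTheory.cond, integral_smul_measure, ENNReal.toReal_inv,
    ← measureReal_def, smul_eq_mul]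
  field_simp

end CondCov

theorem setIntegral_withDensity_ofReal {α : Type*} [MeasurableSpace α] {μ : Measure α}
    {f : α → ℝ} (hf : Measurable f) (hf_nonneg : ∀ x, 0 ≤ f x) (g : α → ℝ) {S : Set α}
    (hS : MeasurableSet S) :
    ∫ x in S, g x ∂μ.withDensity (fun x => ENNReal.ofReal (f x)) = ∫ x in S, f x * g x ∂μ := by
  rw [setIntegral_withDensity_eq_setIntegral_toReal_smul hf.ennreal_ofReal
    (ae_of_all _ fun _ => ENNReal.ofReal_lt_top) g hS]
  simp only [ENNReal.toReal_ofReal (hf_nonneg _), smul_eq_mul]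

theorem setIntegral_Icc_prod_Icc {E : Type*} [NormedAddCommGroup E] [NormedSpace ℝ E]
    [CompleteSpace E] {F : ℝ × ℝ → E} (hF : Continuous F) {a b c d : ℝ} (hab : a ≤ b)
    (hcd : c ≤ d) : ∫ p in Icc a b ×ˢ Icc c d, F p = rectIntegral F a b c d := by
  rw [Measure.volume_eq_prod, setIntegral_prod _
    (hF.continuousOn.integrableOn_compact (isCompact_Icc.prod isCompact_Icc)),
    rectIntegral, intervalIntegral.integral_of_le hab, ← integral_Icc_eq_integral_Ioc]
  refine setIntegral_congr_fun measurableSet_Icc fun s _ => ?_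
  rw [intervalIntegral.integral_of_le hcd, ← integral_Icc_eq_integral_Ioc]

theorem rectIntegral_apply {ι : Type*} [Fintype ι] {F : ℝ × ℝ → ι → ℝ} (hF : Continuous F)
    (a b c d : ℝ) (i : ι) : rectIntegral F a b c d i = rectIntegral (fun p => F p i) a b c d := by
  have hslice (s : ℝ) : Continuous fun t => F (s, t) := hF.comp (Continuous.prodMk_right s)
  let π := ContinuousLinearMap.proj (R := ℝ) (φ := fun _ : ι => ℝ) i
  exact (π.intervalIntegral_comp_comm
    ((continuous_intervalIntegral_slice hF c d).intervalIntegrable _ _)).symm.trans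
    (intervalIntegral.integral_congr fun s _ =>
      (π.intervalIntegral_comp_comm ((hslice s).intervalIntegrable _ _)).symm)

def momentVec (p : ℝ × ℝ) : Fin 4 → ℝ := ![1, p.1, p.2, p.1 * p.2]

theorem continuous_momentVec : Continuous momentVec := by
  unfold momentVec; fun_prop

noncomputable def momentForm : (Fin 4 → ℝ) →L[ℝ] (Fin 4 → ℝ) →L[ℝ] ℝ :=
  (ContinuousLinearMap.mul ℝ ℝ).bilinearComp (.proj 3) (.proj 0) -
    (ContinuousLinearMap.mul ℝ ℝ).bilinearComp (.proj 1) (.proj 2)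

@[simp]
theorem momentForm_apply (m m' : Fin 4 → ℝ) : momentForm m m' = m 3 * m' 0 - m 1 * m' 2 := rfl

theorem momentForm_rectIntegral_self {μ : Measure (ℝ × ℝ)} [IsFiniteMeasure μ] {f : ℝ × ℝ → ℝ}
    (hμ : μ = volume.withDensity fun p => ENNReal.ofReal (f p)) (hf : Continuous f)
    (hf_nonneg : ∀ p, 0 ≤ f p) {a b c d : ℝ} (hab : a ≤ b) (hcd : c ≤ d) :
    momentForm (rectIntegral (fun p => f p • momentVec p) a b c d)
        (rectIntegral (fun p => f p • momentVec p) a b c d) =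
      μ.real (Icc a b ×ˢ Icc c d) ^ 2 * condCov μ (Icc a b ×ˢ Icc c d) Prod.fst Prod.snd := by
  have hmoment (g : ℝ × ℝ → ℝ) (hg : Continuous g) :
      ∫ p in Icc a b ×ˢ Icc c d, g p ∂μ = rectIntegral (fun p => f p * g p) a b c d := by
    rw [hμ, setIntegral_withDensity_ofReal hf.measurable hf_nonneg _
      (measurableSet_Icc.prod measurableSet_Icc),
      setIntegral_Icc_prod_Icc (F := fun p => f p * g p) (hf.mul hg) hab hcd]
  have hmass : μ.real (Icc a b ×ˢ Icc c d) = rectIntegral (fun p => f p * 1) a b c d := by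
    rw [← hmoment _ continuous_const, setIntegral_const, smul_eq_mul, mul_one]
  have hvec : Continuous fun p => f p • momentVec p := hf.smul continuous_momentVec
  rw [measureReal_sq_mul_condCov, hmass, hmoment _ (by fun_prop), hmoment _ continuous_fst,
    hmoment _ continuous_snd, momentForm_apply, rectIntegral_apply hvec, rectIntegral_apply hvec,
    rectIntegral_apply hvec, rectIntegral_apply hvec]
  simp only [momentVec, Pi.smul_apply, Matrix.cons_val, smul_eq_mul, Matrix.cons_val_zero,
    Matrix.cons_val_one, mul_one]
  ring

theorem condCov_map_Icc_prod_Icc_eq_zero {Ω : Type*} [MeasurableSpace Ω] {P : Measure Ω}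
    [IsProbabilityMeasure P] {X Y : Ω → ℝ} (hX : Measurable X) (hY : Measurable Y)
    [(P.map fun ω => (X ω, Y ω)).IsOpenPosMeasure]
    (hcov : ∀ p₁ q₁ p₂ q₂ : ℝ, 0 < p₁ → p₁ < q₁ → q₁ < 1 → 0 < p₂ → p₂ < q₂ → q₂ < 1 →
      condCov P (quantileSet P X Y p₁ q₁ p₂ q₂) X Y = 0)
    {a b c d : ℝ} (hab : a < b) (hcd : c < d) :
    condCov (P.map fun ω => (X ω, Y ω)) (Icc a b ×ˢ Icc c d) Prod.fst Prod.snd = 0 := by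
  have hpair : Measurable fun ω => (X ω, Y ω) := hX.prodMk hY
  have : (P.map X).IsOpenPosMeasure := by
    rw [← Measure.fst_map_prodMk hY]
    exact continuous_fst.isOpenPosMeasure_map Prod.fst_surjective
  have : (P.map Y).IsOpenPosMeasure := by
    rw [← Measure.snd_map_prodMk hX]
    exact continuous_snd.isOpenPosMeasure_map Prod.snd_surjective
  have hXmono := cdfOf_strictMono (P := P) hX
  have hYmono := cdfOf_strictMono (P := P) hY
  rw [condCov_map hpair (measurableSet_Icc.prod measurableSet_Icc) measurable_fst measurable_snd,
    ← quantileSet_cdfOf hXmono.injective hYmono.injective]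
  exact hcov _ _ _ _ (cdfOf_mem_Ioo hX a).1 (hXmono hab) (cdfOf_mem_Ioo hX b).2
    (cdfOf_mem_Ioo hY c).1 (hYmono hcd) (cdfOf_mem_Ioo hY d).2

/-- If `(X,Y)` has a jointly continuous, strictly positive density `f` and the conditional
covariance vanishes on every quantile set, then the density satisfies the cross-product
identity `f(x₁,y₁)·f(x₂,y₂) = f(x₁,y₂)·f(x₂,y₁)`. -/
theorem density_cross_identity_of_condCov_eq_zero
    {Ω : Type*} [MeasurableSpace Ω] (P : Measure Ω) [IsProbabilityMeasure P]
    (X Y : Ω → ℝ) (hX : Measurable X) (hY : Measurable Y)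
    (f : ℝ × ℝ → ℝ) (hf_cont : Continuous f) (hf_pos : ∀ p, 0 < f p)
    (hf_law : Measure.map (fun ω => (X ω, Y ω)) P =
      (volume : Measure (ℝ × ℝ)).withDensity (fun p => ENNReal.ofReal (f p)))
    (hcov : ∀ p₁ q₁ p₂ q₂ : ℝ, 0 < p₁ → p₁ < q₁ → q₁ < 1 → 0 < p₂ → p₂ < q₂ → q₂ < 1 →
      condCov P (quantileSet P X Y p₁ q₁ p₂ q₂) X Y = 0) :
    ∀ x₁ x₂ y₁ y₂ : ℝ, f (x₁, y₁) * f (x₂, y₂) = f (x₁, y₂) * f (x₂, y₁) := by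
  intro x₁ x₂ y₁ y₂
  have : IsProbabilityMeasure (P.map fun ω => (X ω, Y ω)) :=
    Measure.isProbabilityMeasure_map (hX.prodMk hY).aemeasurable
  have : (P.map fun ω => (X ω, Y ω)).IsOpenPosMeasure := hf_law ▸
    isOpenPosMeasure_withDensity (by fun_prop) fun p => (ENNReal.ofReal_pos.2 (hf_pos p)).ne'
  have hmoment (a b c d : ℝ) (hab : a < b) (hcd : c < d) :
      momentForm (rectIntegral (fun p => f p • momentVec p) a b c d)
        (rectIntegral (fun p => f p • momentVec p) a b c d) = 0 := by
    rw [momentForm_rectIntegral_self hf_law hf_cont (fun p => (hf_pos p).le) hab.le hcd.le,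
      condCov_map_Icc_prod_Icc_eq_zero hX hY hcov hab hcd, mul_zero]
  have hcross := add_flip_cross_eq_zero_of_rectIntegral (F := fun p => f p • momentVec p)
    (hf_cont.smul continuous_momentVec) momentForm hmoment x₁ x₂ y₁ y₂
  have hfactor : (x₁ - x₂) * (y₁ - y₂) *
      (f (x₁, y₁) * f (x₂, y₂) - f (x₁, y₂) * f (x₂, y₁)) = 0 := by
    simp only [momentVec, Matrix.smul_cons, smul_eq_mul, mul_one, Matrix.smul_empty,
      add_apply, ContinuousLinearMap.flip_apply, momentForm_apply,
      Matrix.cons_val, Matrix.cons_val_zero, Matrix.cons_val_one] at hcross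
    linear_combination hcross
  rcases mul_eq_zero.1 hfactor with h | h
  · rcases mul_eq_zero.1 h with h | h <;> rw [sub_eq_zero] at h <;> simp [h, mul_comm]
  · exact sub_eq_zero.1 h
end

section
/- Let (X,Y) be a random vector on ℝ² whose law has a jointly continuous, strictly positive probability density function, and let F_X, F_Y denote the marginal cumulative distribution functions of X and Y. Then X and Y are independent if and only if for every choice of quantile splits 0 < p₁ < q₁ < 1 and 0 < p₂ < q₂ < 1 and the corresponding quantile set A, the conditional covariance Cov_A[F_X(X), F_Y(Y)] equals 0 (i.e., the conditional Spearman's ρ on every quantile set vanishes). -/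
open MeasureTheory ProbabilityTheory Set

/-!
Under independence the law of `(X, Y)` is a product, so integrals of `φ(X) ψ(Y)` over a product
event `X⁻¹' S ∩ Y⁻¹' T` factor and the conditional covariance vanishes.

Conversely, the marginal CDFs `F`, `G` are continuous and strictly increasing with values in
`(0, 1)`, so every rectangle `[a, b] × [c, d]` is a quantile set, and a vanishing conditional
covariance on it says `(∬ f) (∬ F G f) = (∬ F f) (∬ G f)`. For continuous `A`, `B` and an
injective weight `w`, the identity `(∫ A) (∫ w B) = (∫ w A) (∫ B)` on every interval forces
`A / B` to be constant: its mixed derivative in the two endpoints is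
`(w q - w p) (A q B p - A p B q)`. Used once in `x` (with `A`, `B` the inner integrals over
`[c, d]`) and once in `y`, this gives `f(x, y) f(x', y') = f(x, y') f(x', y)`: the density
factors, so the law of `(X, Y)` is a product measure.
-/

open scoped ENNReal
open intervalIntegral (continuous_parametric_intervalIntegral_of_continuous')

section Proportionality

variable {A B w : ℝ → ℝ}

theorem weight_sub_mul_cross_eq_zero (hA : Continuous A) (hB : Continuous B) (hw : Continuous w)
    (h : ∀ p q, p < q → (∫ u in p..q, A u) * (∫ u in p..q, w u * B u) =
      (∫ u in p..q, w u * A u) * (∫ u in p..q, B u)) {p q : ℝ} (hpq : p < q) :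
    (w q - w p) * (A q * B p - A p * B q) = 0 := by
  have hwA : Continuous fun u => w u * A u := hw.mul hA
  have hwB : Continuous fun u => w u * B u := hw.mul hB
  have hright : ∀ {g : ℝ → ℝ}, Continuous g → ∀ p',
      HasDerivAt (fun r => ∫ u in p'..r, g u) (g q) q :=
    fun hg p' => (hg.integral_hasStrictDerivAt p' q).hasDerivAt
  have hleft : ∀ {g : ℝ → ℝ}, Continuous g →
      HasDerivAt (fun r => ∫ u in r..q, g u) (-g p) p := fun hg =>
    intervalIntegral.integral_hasDerivAt_left (hg.intervalIntegrable _ _)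
      (hg.stronglyMeasurableAtFilter _ _) hg.continuousAt
  -- `hdq`: the `q`-derivative of the defect `(∫ A) (∫ w B) - (∫ w A) (∫ B)` over `[p', q]`
  have hdq : ∀ p', p' < q → A q * (∫ u in p'..q, w u * B u) + (∫ u in p'..q, A u) * (w q * B q)
      - (w q * A q * (∫ u in p'..q, B u) + (∫ u in p'..q, w u * A u) * B q) = 0 := by
    intro p' hp'
    refine (((hright hA p').mul (hright hwB p')).sub ((hright hwA p').mul (hright hB p'))).unique
      ((hasDerivAt_const q 0).congr_of_eventuallyEq ?_)
    filter_upwards [Ioi_mem_nhds hp'] with r hr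
    exact sub_eq_zero.2 (h p' r hr)
  have hdp := ((((hleft hwB).const_mul (A q)).add ((hleft hA).mul_const (w q * B q))).sub
      (((hleft hB).const_mul (w q * A q)).add ((hleft hwA).mul_const (B q)))).unique
    ((hasDerivAt_const p 0).congr_of_eventuallyEq ?_)
  · linear_combination hdp
  filter_upwards [Iio_mem_nhds hpq] with r hr
  exact hdq r hr

theorem mul_eq_mul_of_integral_mul_eq (hA : Continuous A) (hB : Continuous B)
    (hw : Continuous w) (hw_inj : Function.Injective w)
    (h : ∀ p q, p < q → (∫ u in p..q, A u) * (∫ u in p..q, w u * B u) =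
      (∫ u in p..q, w u * A u) * (∫ u in p..q, B u)) (p q : ℝ) :
    A q * B p = A p * B q := by
  have hlt : ∀ {p q}, p < q → A q * B p = A p * B q := fun hpq =>
    sub_eq_zero.1 <| (mul_eq_zero.1 (weight_sub_mul_cross_eq_zero hA hB hw h hpq)).resolve_left
      (sub_ne_zero.2 (hw_inj.ne hpq.ne'))
  rcases lt_trichotomy p q with hpq | rfl | hpq
  · exact hlt hpq
  · rfl
  · exact (hlt hpq).symm

end Proportionality

theorem density_mul_eq_of_integral_rect {f : ℝ × ℝ → ℝ} {F G : ℝ → ℝ} (hf : Continuous f)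
    (hF : Continuous F) (hG : Continuous G) (hF_inj : Function.Injective F)
    (hG_inj : Function.Injective G)
    (h : ∀ a b c d, a < b → c < d →
      (∫ x in a..b, ∫ y in c..d, f (x, y)) * (∫ x in a..b, ∫ y in c..d, F x * (G y * f (x, y))) =
        (∫ x in a..b, ∫ y in c..d, F x * f (x, y)) * (∫ x in a..b, ∫ y in c..d, G y * f (x, y)))
    (x x' y y' : ℝ) : f (x, y) * f (x', y') = f (x, y') * f (x', y) := by
  have hslice : ∀ c d, c < d → ∀ u v,
      (∫ y in c..d, f (v, y)) * (∫ y in c..d, G y * f (u, y)) =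
        (∫ y in c..d, f (u, y)) * (∫ y in c..d, G y * f (v, y)) := by
    intro c d hcd
    refine mul_eq_mul_of_integral_mul_eq (w := F)
      (continuous_parametric_intervalIntegral_of_continuous' (f := fun x y => f (x, y)) hf c d)
      (continuous_parametric_intervalIntegral_of_continuous' (by fun_prop) c d)
      hF hF_inj fun a b hab => ?_
    simpa only [intervalIntegral.integral_const_mul] using h a b c d hab hcd
  have hf_slice : ∀ u, Continuous fun y => f (u, y) := fun u => by fun_prop
  refine mul_eq_mul_of_integral_mul_eq (hf_slice x) (hf_slice x') hG hG_inj (fun c d hcd => ?_) y' y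
  rw [hslice c d hcd x' x, mul_comm]

theorem condCov_eq_zero_iff {Ω : Type*} [MeasurableSpace Ω] {P : Measure Ω} {A : Set Ω}
    (hA : P.real A ≠ 0) (U V : Ω → ℝ) :
    condCov P A U V = 0 ↔
      P.real A * ∫ ω in A, U ω * V ω ∂P = (∫ ω in A, U ω ∂P) * ∫ ω in A, V ω ∂P := by
  rw [condCov, ProbabilityTheory.cond, integral_smul_measure, integral_smul_measure,
    integral_smul_measure, ENNReal.toReal_inv, ← measureReal_def, sub_eq_zero]
  simp only [smul_eq_mul]
  constructor <;> intro h
  · field_simp at h; linear_combination h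
  · field_simp; linear_combination h

namespace ProbabilityTheory.IndepFun

variable {Ω β γ : Type*} [MeasurableSpace Ω] [MeasurableSpace β] [MeasurableSpace γ]
  {P : Measure Ω} {X : Ω → β} {Y : Ω → γ}

theorem setIntegral_preimage_inter_mul (h : IndepFun X Y P) (hX : Measurable X)
    (hY : Measurable Y) {φ : β → ℝ} {ψ : γ → ℝ} (hφ : Measurable φ) (hψ : Measurable ψ)
    {S : Set β} {T : Set γ} (hS : MeasurableSet S) (hT : MeasurableSet T) :
    ∫ ω in X ⁻¹' S ∩ Y ⁻¹' T, φ (X ω) * ψ (Y ω) ∂P =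
      (∫ ω in X ⁻¹' S, φ (X ω) ∂P) * ∫ ω in Y ⁻¹' T, ψ (Y ω) ∂P := by
  have hφS := (hφ.indicator hS).comp hX
  have hψT := (hψ.indicator hT).comp hY
  rw [← integral_indicator ((hX hS).inter (hY hT)), ← integral_indicator (hX hS),
    ← integral_indicator (hY hT)]
  simp only [inter_indicator_mul]
  exact (h.comp (hφ.indicator hS) (hψ.indicator hT)).integral_fun_mul_eq_mul_integral
    hφS.aestronglyMeasurable hψT.aestronglyMeasurable

theorem condCov_preimage_inter_eq_zero [IsFiniteMeasure P] (h : IndepFun X Y P)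
    (hX : Measurable X) (hY : Measurable Y) {φ : β → ℝ} {ψ : γ → ℝ} (hφ : Measurable φ)
    (hψ : Measurable ψ) {S : Set β} {T : Set γ} (hS : MeasurableSet S) (hT : MeasurableSet T) :
    condCov P (X ⁻¹' S ∩ Y ⁻¹' T) (fun ω => φ (X ω)) (fun ω => ψ (Y ω)) = 0 := by
  by_cases hA : P.real (X ⁻¹' S ∩ Y ⁻¹' T) = 0
  · rw [measureReal_eq_zero_iff] at hA
    simp [condCov, cond_eq_zero_of_meas_eq_zero hA]
  have hfactor := fun {φ ψ} (hφ : Measurable φ) (hψ : Measurable ψ) =>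
    h.setIntegral_preimage_inter_mul hX hY hφ hψ hS hT
  have hU := hfactor hφ (measurable_const (a := (1 : ℝ)))
  have hV := hfactor (measurable_const (a := (1 : ℝ))) hψ
  have hmass := hfactor (measurable_const (a := (1 : ℝ))) (measurable_const (a := (1 : ℝ)))
  simp only [mul_one, one_mul, setIntegral_const, smul_eq_mul] at hU hV hmass
  rw [condCov_eq_zero_iff hA, hmass, hfactor hφ hψ, hU, hV]
  ring

end ProbabilityTheory.IndepFun

theorem withDensity_apply_eq_zero_iff_of_ne_zero {α : Type*} [MeasurableSpace α] {μ : Measure α}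
    {g : α → ℝ≥0∞} (hg : AEMeasurable g μ) (hg0 : ∀ x, g x ≠ 0) (s : Set α) :
    μ.withDensity g s = 0 ↔ μ s = 0 := by
  simp [withDensity_apply_eq_zero' hg, hg0]

section Marginals

variable {Ω : Type*} [MeasurableSpace Ω] {P : Measure Ω} {X Y : Ω → ℝ} {f : ℝ × ℝ → ℝ}

theorem map_fst_apply_eq_zero_iff (hX : Measurable X) (hY : Measurable Y) (hf : Measurable f)
    (hf_pos : ∀ p, 0 < f p)
    (hlaw : P.map (fun ω => (X ω, Y ω)) = volume.withDensity fun p => ENNReal.ofReal (f p))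
    ⦃s : Set ℝ⦄ (hs : MeasurableSet s) : P.map X s = 0 ↔ volume s = 0 := by
  have hpre : X ⁻¹' s = (fun ω => (X ω, Y ω)) ⁻¹' (s ×ˢ univ) := by ext; simp
  rw [Measure.map_apply hX hs, hpre, ← Measure.map_apply (hX.prodMk hY) (hs.prod .univ), hlaw,
    withDensity_apply_eq_zero_iff_of_ne_zero (by fun_prop)
      (fun p => (ENNReal.ofReal_pos.2 (hf_pos p)).ne'),
    Measure.volume_eq_prod, Measure.prod_prod]
  simp

theorem map_snd_apply_eq_zero_iff (hX : Measurable X) (hY : Measurable Y) (hf : Measurable f)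
    (hf_pos : ∀ p, 0 < f p)
    (hlaw : P.map (fun ω => (X ω, Y ω)) = volume.withDensity fun p => ENNReal.ofReal (f p))
    ⦃s : Set ℝ⦄ (hs : MeasurableSet s) : P.map Y s = 0 ↔ volume s = 0 := by
  have hpre : Y ⁻¹' s = (fun ω => (X ω, Y ω)) ⁻¹' (univ ×ˢ s) := by ext; simp
  rw [Measure.map_apply hY hs, hpre, ← Measure.map_apply (hX.prodMk hY) (.univ |>.prod hs), hlaw,
    withDensity_apply_eq_zero_iff_of_ne_zero (by fun_prop)
      (fun p => (ENNReal.ofReal_pos.2 (hf_pos p)).ne'),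
    Measure.volume_eq_prod, Measure.prod_prod]
  simp

end Marginals

section Cdf

variable {μ : Measure ℝ} [IsProbabilityMeasure μ]

theorem continuous_cdf_of_absolutelyContinuous (h : μ ≪ volume) : Continuous (cdf μ) := by
  refine continuous_iff_continuousAt.2 fun x =>
    (monotone_cdf μ).continuousAt_iff_leftLim_eq_rightLim.2 ?_
  have hx := (cdf μ).measure_singleton x
  rw [measure_cdf, h (Real.volume_singleton), eq_comm, ENNReal.ofReal_eq_zero, sub_nonpos] at hx
  rw [(cdf μ).rightLim_eq]
  exact le_antisymm ((monotone_cdf μ).leftLim_le le_rfl) hx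

theorem strictMono_cdf_of_absolutelyContinuous (h : volume ≪ μ) : StrictMono (cdf μ) := by
  intro a b hab
  have hIoc := (cdf μ).measure_Ioc a b
  rw [measure_cdf] at hIoc
  have hne : μ (Ioc a b) ≠ 0 := fun h0 => hab.not_ge (by simpa using h h0)
  rwa [hIoc, ne_eq, ENNReal.ofReal_eq_zero, not_le, sub_pos] at hne

end Cdf

theorem cdf_mem_Ioo_of_strictMono {μ : Measure ℝ} (h : StrictMono (cdf μ)) (x : ℝ) :
    cdf μ x ∈ Ioo 0 1 :=
  ⟨(cdf_nonneg μ (x - 1)).trans_lt (h (by linarith)),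
    (h (lt_add_one x)).trans_le (cdf_le_one μ (x + 1))⟩

theorem cdfOf_eq_cdf_map {Ω : Type*} [MeasurableSpace Ω] {P : Measure Ω} [IsProbabilityMeasure P]
    {X : Ω → ℝ} (hX : Measurable X) : cdfOf P X = cdf (P.map X) := by
  have := Measure.isProbabilityMeasure_map (μ := P) hX.aemeasurable
  ext x
  rw [cdf_eq_real, measureReal_def, Measure.map_apply hX measurableSet_Iic]
  rfl

section CdfOf

variable {Ω : Type*} [MeasurableSpace Ω] {P : Measure Ω} [IsProbabilityMeasure P] {X : Ω → ℝ}

theorem strictMono_cdfOf (hX : Measurable X)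
    (hac : ∀ ⦃s⦄, MeasurableSet s → (P.map X s = 0 ↔ volume s = 0)) :
    StrictMono (cdfOf P X) := by
  have := Measure.isProbabilityMeasure_map (μ := P) hX.aemeasurable
  rw [cdfOf_eq_cdf_map hX]
  exact strictMono_cdf_of_absolutelyContinuous (.mk fun _ hs h0 => (hac hs).1 h0)

theorem continuous_cdfOf (hX : Measurable X)
    (hac : ∀ ⦃s⦄, MeasurableSet s → (P.map X s = 0 ↔ volume s = 0)) :
    Continuous (cdfOf P X) := by
  have := Measure.isProbabilityMeasure_map (μ := P) hX.aemeasurable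
  rw [cdfOf_eq_cdf_map hX]
  exact continuous_cdf_of_absolutelyContinuous (.mk fun _ hs h0 => (hac hs).2 h0)

theorem cdfOf_mem_Ioo_s6 (hX : Measurable X) (hF : StrictMono (cdfOf P X)) (x : ℝ) :
    cdfOf P X x ∈ Ioo 0 1 := by
  rw [cdfOf_eq_cdf_map hX] at hF ⊢
  exact cdf_mem_Ioo_of_strictMono hF x

end CdfOf

theorem quantileSet_cdfOf_eq_preimage {Ω : Type*} [MeasurableSpace Ω] {P : Measure Ω}
    {X Y : Ω → ℝ} (hF : Function.Injective (cdfOf P X)) (hG : Function.Injective (cdfOf P Y))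
    (a b c d : ℝ) :
    quantileSet P X Y (cdfOf P X a) (cdfOf P X b) (cdfOf P Y c) (cdfOf P Y d) =
      (fun ω => (X ω, Y ω)) ⁻¹' (Icc a b ×ˢ Icc c d) := by
  simp only [quantileSet, quantileOf, Function.leftInverse_invFun hF _,
    Function.leftInverse_invFun hG _]
  rfl

theorem setIntegral_Icc_prod_eq_intervalIntegral {g : ℝ × ℝ → ℝ} (hg : Continuous g)
    {a b c d : ℝ} (hab : a ≤ b) (hcd : c ≤ d) :
    ∫ p in Icc a b ×ˢ Icc c d, g p = ∫ x in a..b, ∫ y in c..d, g (x, y) := by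
  rw [Measure.volume_eq_prod, setIntegral_prod _ (hg.continuousOn.integrableOn_compact
    (isCompact_Icc.prod isCompact_Icc)), intervalIntegral.integral_of_le hab,
    ← integral_Icc_eq_integral_Ioc]
  refine setIntegral_congr_fun measurableSet_Icc fun x _ => ?_
  rw [intervalIntegral.integral_of_le hcd, integral_Icc_eq_integral_Ioc]

theorem setIntegral_Icc_prod_withDensity {f g : ℝ × ℝ → ℝ} (hf : Continuous f)
    (hf_nonneg : ∀ p, 0 ≤ f p) (hg : Continuous g) {a b c d : ℝ} (hab : a ≤ b) (hcd : c ≤ d) :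
    ∫ p in Icc a b ×ˢ Icc c d, g p ∂(volume.withDensity fun p => ENNReal.ofReal (f p)) =
      ∫ x in a..b, ∫ y in c..d, g (x, y) * f (x, y) := by
  rw [setIntegral_withDensity_eq_setIntegral_toReal_smul' _ (by fun_prop)
    (ae_of_all _ fun _ => ENNReal.ofReal_lt_top),
    ← setIntegral_Icc_prod_eq_intervalIntegral (g := fun p => g p * f p) (by fun_prop) hab hcd]
  simp only [ENNReal.toReal_ofReal (hf_nonneg _), smul_eq_mul, mul_comm]

theorem integral_rect_mul_eq_of_condCov_eq_zero {Ω : Type*} [MeasurableSpace Ω] {P : Measure Ω}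
    {X Y : Ω → ℝ} {f : ℝ × ℝ → ℝ} (hX : Measurable X) (hY : Measurable Y) (hf : Continuous f)
    (hf_pos : ∀ p, 0 < f p)
    (hlaw : P.map (fun ω => (X ω, Y ω)) = volume.withDensity fun p => ENNReal.ofReal (f p))
    {U V : ℝ → ℝ} (hU : Continuous U) (hV : Continuous V) {a b c d : ℝ} (hab : a < b)
    (hcd : c < d)
    (h : condCov P ((fun ω => (X ω, Y ω)) ⁻¹' (Icc a b ×ˢ Icc c d)) (fun ω => U (X ω))
      (fun ω => V (Y ω)) = 0) :
    (∫ x in a..b, ∫ y in c..d, f (x, y)) * (∫ x in a..b, ∫ y in c..d, U x * (V y * f (x, y))) =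
      (∫ x in a..b, ∫ y in c..d, U x * f (x, y)) * (∫ x in a..b, ∫ y in c..d, V y * f (x, y)) := by
  have htransfer : ∀ g : ℝ × ℝ → ℝ, Continuous g →
      ∫ ω in (fun ω => (X ω, Y ω)) ⁻¹' (Icc a b ×ˢ Icc c d), g (X ω, Y ω) ∂P =
        ∫ x in a..b, ∫ y in c..d, g (x, y) * f (x, y) := fun g hg => by
    rw [← setIntegral_map (measurableSet_Icc.prod measurableSet_Icc) hg.aestronglyMeasurable
      (hX.prodMk hY).aemeasurable, hlaw,
      setIntegral_Icc_prod_withDensity hf (fun p => (hf_pos p).le) hg hab.le hcd.le]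
  have hmass := htransfer (fun _ => 1) continuous_const
  have hUV := htransfer (fun p => U p.1 * V p.2) (by fun_prop)
  have hU' := htransfer (fun p => U p.1) (by fun_prop)
  have hV' := htransfer (fun p => V p.2) (by fun_prop)
  simp only [setIntegral_const, smul_eq_mul, mul_one, one_mul] at hmass hUV hU' hV'
  have hpos : 0 < ∫ x in a..b, ∫ y in c..d, f (x, y) :=
    intervalIntegral.intervalIntegral_pos_of_pos_on
      ((continuous_parametric_intervalIntegral_of_continuous'
        (f := fun x y => f (x, y)) hf c d).intervalIntegrable a b)
      (fun x _ => intervalIntegral.intervalIntegral_pos_of_pos_on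
        ((by fun_prop : Continuous fun y => f (x, y)).intervalIntegrable c d)
        (fun y _ => hf_pos _) hcd) hab
  rw [condCov_eq_zero_iff (hmass ▸ hpos.ne'), hmass, hUV, hU', hV'] at h
  simpa only [mul_assoc] using h

theorem indepFun_of_map_eq_prod {Ω β γ : Type*} [MeasurableSpace Ω] [MeasurableSpace β]
    [MeasurableSpace γ] {P : Measure Ω} [IsProbabilityMeasure P] {X : Ω → β} {Y : Ω → γ}
    {μ : Measure β} {ν : Measure γ} [SFinite μ] [SFinite ν] (hX : Measurable X)
    (hY : Measurable Y) (h : P.map (fun ω => (X ω, Y ω)) = μ.prod ν) : IndepFun X Y P := by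
  have hmapX : P.map X = ν univ • μ := by
    rw [← Measure.map_fst_prod, ← h, Measure.map_map measurable_fst (hX.prodMk hY)]
    rfl
  have hmapY : P.map Y = μ univ • ν := by
    rw [← Measure.map_snd_prod, ← h, Measure.map_map measurable_snd (hX.prodMk hY)]
    rfl
  have hmass : μ univ * ν univ = 1 := by
    have := Measure.isProbabilityMeasure_map (μ := P) (hX.prodMk hY).aemeasurable
    rw [← Measure.prod_prod, univ_prod_univ, ← h, measure_univ]
  rw [indepFun_iff_map_prod_eq_prod_map_map hX.aemeasurable hY.aemeasurable, h, hmapX, hmapY,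
    Measure.prod_smul_left, Measure.prod_smul_right, smul_smul, mul_comm, hmass, one_smul]

theorem indepFun_of_density_mul_eq {Ω : Type*} [MeasurableSpace Ω] {P : Measure Ω}
    [IsProbabilityMeasure P] {X Y : Ω → ℝ} {f : ℝ × ℝ → ℝ} (hX : Measurable X)
    (hY : Measurable Y) (hf : Measurable f) (hf_pos : ∀ p, 0 < f p)
    (hlaw : P.map (fun ω => (X ω, Y ω)) = volume.withDensity fun p => ENNReal.ofReal (f p))
    (hfac : ∀ x x' y y', f (x, y) * f (x', y') = f (x, y') * f (x', y)) : IndepFun X Y P := by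
  have hsplit : (fun p : ℝ × ℝ => ENNReal.ofReal (f p)) =
      fun p => ENNReal.ofReal (f (p.1, 0)) * ENNReal.ofReal (f (0, p.2) / f (0, 0)) := by
    ext ⟨x, y⟩
    rw [← ENNReal.ofReal_mul (hf_pos _).le, mul_div_assoc']
    congr 1
    rw [eq_div_iff (hf_pos _).ne', hfac]
  refine indepFun_of_map_eq_prod hX hY (μ := volume.withDensity fun x => ENNReal.ofReal (f (x, 0)))
    (ν := volume.withDensity fun y => ENNReal.ofReal (f (0, y) / f (0, 0))) ?_
  rw [prod_withDensity (by fun_prop) (by fun_prop), ← Measure.volume_eq_prod, ← hsplit, hlaw]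

/-- Conditional Spearman's ρ and independence: `X` and `Y` are independent if and only if the
conditional covariance of `(F_X(X), F_Y(Y))` vanishes on every quantile set, i.e. the
conditional Spearman's ρ on every quantile set is zero. -/
theorem independence_iff_conditional_spearman_eq_zero
    {Ω : Type*} [MeasurableSpace Ω] (P : Measure Ω) [IsProbabilityMeasure P]
    (X Y : Ω → ℝ) (hX : Measurable X) (hY : Measurable Y)
    (f : ℝ × ℝ → ℝ) (hf_cont : Continuous f) (hf_pos : ∀ p, 0 < f p)
    (hf_law : Measure.map (fun ω => (X ω, Y ω)) P =
      (volume : Measure (ℝ × ℝ)).withDensity (fun p => ENNReal.ofReal (f p))) :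
    IndepFun X Y P ↔
      ∀ p₁ q₁ p₂ q₂ : ℝ, 0 < p₁ → p₁ < q₁ → q₁ < 1 → 0 < p₂ → p₂ < q₂ → q₂ < 1 →
        condCov P (quantileSet P X Y p₁ q₁ p₂ q₂)
          (fun ω => cdfOf P X (X ω)) (fun ω => cdfOf P Y (Y ω)) = 0 := by
  have hacX := map_fst_apply_eq_zero_iff hX hY hf_cont.measurable hf_pos hf_law
  have hacY := map_snd_apply_eq_zero_iff hX hY hf_cont.measurable hf_pos hf_law
  have hF := strictMono_cdfOf hX hacX
  have hG := strictMono_cdfOf hY hacY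
  constructor
  · rintro hind p₁ q₁ p₂ q₂ - - - - - -
    exact hind.condCov_preimage_inter_eq_zero hX hY hF.monotone.measurable
      hG.monotone.measurable (S := Icc (quantileOf P X p₁) (quantileOf P X q₁))
      (T := Icc (quantileOf P Y p₂) (quantileOf P Y q₂)) measurableSet_Icc measurableSet_Icc
  · intro hcov
    refine indepFun_of_density_mul_eq hX hY hf_cont.measurable hf_pos hf_law
      (density_mul_eq_of_integral_rect hf_cont (continuous_cdfOf hX hacX)
        (continuous_cdfOf hY hacY) hF.injective hG.injective fun a b c d hab hcd => ?_)
    refine integral_rect_mul_eq_of_condCov_eq_zero hX hY hf_cont hf_pos hf_law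
      (continuous_cdfOf hX hacX) (continuous_cdfOf hY hacY) hab hcd ?_
    rw [← quantileSet_cdfOf_eq_preimage hF.injective hG.injective]
    exact hcov _ _ _ _ (cdfOf_mem_Ioo_s6 hX hF a).1 (hF hab) (cdfOf_mem_Ioo_s6 hX hF b).2
      (cdfOf_mem_Ioo_s6 hY hG c).1 (hG hcd) (cdfOf_mem_Ioo_s6 hY hG d).2
end

section
/- Let X = (X₁, X₂, X₃) be a random vector whose law has a jointly continuous, strictly positive probability density function f on ℝ³. Suppose that for every choice of quantile splits 0 < pᵢ < qᵢ < 1, i = 1,2,3, and the corresponding quantile box A, the conditional covariance Cov_A[X₁, X₂] equals 0. Then for all x₁, x₂, x₃, y₁, y₂, y₃ ∈ ℝ: f(x₁,x₂,x₃)·f(y₁,y₂,y₃) − f(x₁,y₂,x₃)·f(y₁,x₂,y₃) + f(x₁,x₂,y₃)·f(y₁,y₂,x₃) − f(x₁,y₂,y₃)·f(y₁,x₂,x₃) = 0. -/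
open MeasureTheory ProbabilityTheory Set

/-!
On a box `B`, a vanishing conditional covariance says, in density form, that
`∫∫_{B×B} (x₁ - y₁)(x₂ - y₂) f(x) f(y) dx dy = 0`. Averaging this kernel over the eight ways of
exchanging coordinates between `x` and `y`, each of which preserves `B × B`, turns it into
`K(x, y) = (x₁ - y₁)(x₂ - y₂) D(x, y)` with `D` the four-term expression, so `∫∫_{B×B} K = 0`.
The integral of `K` over a product of two boxes is symmetric and additive in each pair of
coordinate intervals, so its vanishing on the diagonal propagates, one coordinate at a time, to
pairs of disjoint boxes. Shrinking these boxes to a point gives `K = 0` by continuity, hence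
`D = 0` off the hyperplanes `x₁ = y₁` and `x₂ = y₂`, on which `D` vanishes identically.
-/

open Filter Topology Metric

section MeasurePreserving

variable {α β γ δ : Type*} [MeasurableSpace α] [MeasurableSpace β] [MeasurableSpace γ]
  [MeasurableSpace δ]

theorem measurePreserving_prodProdComm (μa : Measure α) (μb : Measure β) (μc : Measure γ)
    (μd : Measure δ) [SFinite μa] [SFinite μb] [SFinite μc] [SFinite μd] :
    MeasurePreserving (fun p : (α × β) × (γ × δ) => ((p.1.1, p.2.1), (p.1.2, p.2.2)))
      ((μa.prod μb).prod (μc.prod μd)) ((μa.prod μc).prod (μb.prod μd)) := by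
  have inner : MeasurePreserving (fun q : β × γ × δ => (q.2.1, q.1, q.2.2))
      (μb.prod (μc.prod μd)) (μc.prod (μb.prod μd)) :=
    (measurePreserving_prodAssoc μc μb μd).comp
      ((Measure.measurePreserving_swap.prod (.id μd)).comp
        ((measurePreserving_prodAssoc μb μc μd).symm MeasurableEquiv.prodAssoc))
  exact ((measurePreserving_prodAssoc μa μc (μb.prod μd)).symm MeasurableEquiv.prodAssoc).comp
    (((MeasurePreserving.id μa).prod inner).comp (measurePreserving_prodAssoc μa μb (μc.prod μd)))

def pairMap (T : α × α → α × α) (S : β × β → β × β) (p : (α × β) × (α × β)) :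
    (α × β) × (α × β) :=
  (((T (p.1.1, p.2.1)).1, (S (p.1.2, p.2.2)).1), ((T (p.1.1, p.2.1)).2, (S (p.1.2, p.2.2)).2))

theorem MeasureTheory.MeasurePreserving.pairMap {μ : Measure α} {ν : Measure β} [SFinite μ]
    [SFinite ν] {T : α × α → α × α} {S : β × β → β × β}
    (hT : MeasurePreserving T (μ.prod μ) (μ.prod μ)) (hS : MeasurePreserving S (ν.prod ν) (ν.prod ν)) :
    MeasurePreserving (pairMap T S) ((μ.prod ν).prod (μ.prod ν)) ((μ.prod ν).prod (μ.prod ν)) :=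
  (measurePreserving_prodProdComm μ μ ν ν).comp
    ((hT.prod hS).comp (measurePreserving_prodProdComm μ ν μ ν))

end MeasurePreserving

section Involution

variable {α : Type*} [MeasurableSpace α] {μ : Measure α} {σ : α → α}

theorem Function.Involutive.measurableEmbedding (hinv : Function.Involutive σ)
    (hσ : Measurable σ) : MeasurableEmbedding σ :=
  (MeasurableEquiv.ofInvolutive σ hinv hσ).measurableEmbedding

def symmetrize (σ : α → α) (g : α → ℝ) (z : α) : ℝ := g z + g (σ z)

namespace MeasureTheory.MeasurePreserving

variable (hσ : MeasurePreserving σ μ μ) (hinv : Function.Involutive σ)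
include hσ hinv

theorem setIntegral_preimage_of_invariant {g : α → ℝ}
    (hg : ∀ z, g (σ z) = g z) (s : Set α) : ∫ z in σ ⁻¹' s, g z ∂μ = ∫ z in s, g z ∂μ := by
  simpa only [hg] using hσ.setIntegral_preimage_emb (hinv.measurableEmbedding hσ.measurable) g s

variable {s : Set α} (hs : σ ⁻¹' s = s) {g : α → ℝ} (hg : IntegrableOn g s μ)
include hs hg

theorem integrableOn_comp_of_preimage_eq :
    IntegrableOn (fun z => g (σ z)) s μ := by
  have h := (hσ.integrableOn_comp_preimage (hinv.measurableEmbedding hσ.measurable)).2 hg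
  rwa [hs] at h

theorem integrableOn_symmetrize : IntegrableOn (symmetrize σ g) s μ :=
  hg.add (hσ.integrableOn_comp_of_preimage_eq hinv hs hg)

theorem setIntegral_symmetrize :
    ∫ z in s, symmetrize σ g z ∂μ = 2 * ∫ z in s, g z ∂μ := by
  have h := hσ.setIntegral_preimage_emb (hinv.measurableEmbedding hσ.measurable) g s
  rw [hs] at h
  unfold symmetrize
  rw [integral_add hg (hσ.integrableOn_comp_of_preimage_eq hinv hs hg), h]
  ring

end MeasureTheory.MeasurePreserving

end Involution

theorem eq_zero_of_symm_of_add_of_diag {φ : ℝ → ℝ → ℝ → ℝ → ℝ}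
    (symm : ∀ a b a' b', φ a b a' b' = φ a' b' a b)
    (add : ∀ a m b a' b', a < m → m < b → φ a b a' b' = φ a m a' b' + φ m b a' b')
    (diag : ∀ a b, a < b → φ a b a b = 0) {a₁ a₂ b₁ b₂ : ℝ}
    (h₁ : a₁ < a₂) (h₂ : a₂ < b₁) (h₃ : b₁ < b₂) : φ a₁ a₂ b₁ b₂ = 0 := by
  have adjacent : ∀ a m b, a < m → m < b → φ a m m b = 0 := by
    intro a m b ham hmb
    have h := diag a b (ham.trans hmb)
    rw [add a m b a b ham hmb, symm a m, symm m b, add a m b a m ham hmb,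
      add a m b m b ham hmb, diag a m ham, diag m b hmb, symm m b a m] at h
    linarith
  have h := add a₂ b₁ b₂ a₁ a₂ h₂ h₃
  rw [symm a₂ b₂, symm a₂ b₁, symm b₁ b₂, adjacent a₁ a₂ b₂ h₁ (h₂.trans h₃),
    adjacent a₁ a₂ b₁ h₁ h₂] at h
  linarith

theorem eq_zero_of_setIntegral_closedBall_eq_zero {X : Type*} [PseudoMetricSpace X]
    [ProperSpace X] [MeasurableSpace X] [OpensMeasurableSpace X] {μ : Measure X}
    [IsFiniteMeasureOnCompacts μ] [μ.IsOpenPosMeasure] {g : X → ℝ} (hg : Continuous g) {x : X}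
    (h : ∀ᶠ ε in 𝓝[>] 0, ∫ y in closedBall x ε, g y ∂μ = 0) : g x = 0 := by
  have hlim := (hg.continuousAt.integral_sub_linear_isLittleO_ae (μ := μ)
    (hg.stronglyMeasurableAtFilter μ _)
    ((tendsto_closedBall_smallSets x).mono_left (nhdsWithin_le_nhds (s := Ioi 0))))
    |>.tendsto_div_nhds_zero
  have hconst : ∀ᶠ ε in 𝓝[>] (0 : ℝ),
      ((∫ y in closedBall x ε, g y ∂μ) - μ.real (closedBall x ε) • g x) /
        μ.real (closedBall x ε) = -g x := by
    filter_upwards [h, self_mem_nhdsWithin] with ε hε hεpos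
    have hpos : μ.real (closedBall x ε) ≠ 0 :=
      (ENNReal.toReal_pos (measure_closedBall_pos μ x hεpos).ne' measure_closedBall_lt_top.ne).ne'
    rw [hε, smul_eq_mul, zero_sub, neg_div, mul_div_cancel_left₀ _ hpos]
  have := tendsto_nhds_unique (hlim.congr' hconst) tendsto_const_nhds
  linarith

section Covariance

variable {α : Type*} [MeasurableSpace α]

theorem integral_prod_sub_mul_sub (ν : Measure α) [IsFiniteMeasure ν] {u v : α → ℝ}
    (hu : Integrable u ν) (hv : Integrable v ν) (huv : Integrable (fun x => u x * v x) ν) :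
    ∫ z, (u z.1 - u z.2) * (v z.1 - v z.2) ∂(ν.prod ν) =
      2 * (ν.real univ * ∫ x, u x * v x ∂ν - (∫ x, u x ∂ν) * ∫ x, v x ∂ν) := by
  calc ∫ z, (u z.1 - u z.2) * (v z.1 - v z.2) ∂(ν.prod ν)
      = ∫ z, (u z.1 * v z.1 + u z.2 * v z.2 - u z.1 * v z.2 - v z.1 * u z.2) ∂(ν.prod ν) := by
        congr 1; ext z; ring
    _ = 2 * (ν.real univ * ∫ x, u x * v x ∂ν - (∫ x, u x ∂ν) * ∫ x, v x ∂ν) := by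
      have h₁ := huv.comp_fst ν
      have h₂ := huv.comp_snd ν
      rw [integral_sub ?_ (hv.mul_prod hu), integral_sub ?_ (hu.mul_prod hv), integral_add h₁ h₂,
        integral_fun_fst (fun x => u x * v x), integral_fun_snd (fun x => u x * v x),
        integral_prod_mul, integral_prod_mul, smul_eq_mul]
      · ring
      · exact h₁.add h₂
      · exact (h₁.add h₂).sub (hu.mul_prod hv)

variable {μ : Measure α} [IsFiniteMeasure μ]

theorem setIntegral_prod_sub_mul_sub {s : Set α} {u v : α → ℝ} (hu : IntegrableOn u s μ)
    (hv : IntegrableOn v s μ) (huv : IntegrableOn (fun x => u x * v x) s μ) :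
    ∫ z in s ×ˢ s, (u z.1 - u z.2) * (v z.1 - v z.2) ∂(μ.prod μ) =
      2 * μ.real s ^ 2 * condCov μ s u v := by
  rw [← Measure.prod_restrict, integral_prod_sub_mul_sub _ hu hv huv, condCov,
    ProbabilityTheory.cond, integral_smul_measure, integral_smul_measure, integral_smul_measure,
    measureReal_restrict_apply_univ, ENNReal.toReal_inv, ← measureReal_def]
  rcases eq_or_ne (μ.real s) 0 with h | h
  · simp [h, Measure.restrict_eq_zero.2 ((measureReal_eq_zero_iff).1 h)]
  · simp only [smul_eq_mul]
    field_simp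

end Covariance

section Law

variable {Ω α : Type*} [MeasurableSpace Ω] [MeasurableSpace α] {P : Measure Ω} {X : Ω → α}

theorem map_cond_preimage (hX : Measurable X) {B : Set α} (hB : MeasurableSet B) :
    (P[|X ⁻¹' B]).map X = (P.map X)[|B] := by
  rw [ProbabilityTheory.cond, ProbabilityTheory.cond, Measure.map_smul,
    Measure.restrict_map hX hB, Measure.map_apply hX hB]

theorem condCov_preimage (hX : Measurable X) {B : Set α} (hB : MeasurableSet B) {u v : α → ℝ}
    (hu : Measurable u) (hv : Measurable v) :
    condCov P (X ⁻¹' B) (fun ω => u (X ω)) (fun ω => v (X ω)) = condCov (P.map X) B u v := by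
  simp only [condCov, ← map_cond_preimage hX hB]
  rw [integral_map (f := fun a => u a * v a) hX.aemeasurable (hu.mul hv).aestronglyMeasurable,
    integral_map hX.aemeasurable hu.aestronglyMeasurable,
    integral_map hX.aemeasurable hv.aestronglyMeasurable]

end Law

theorem setIntegral_prod_withDensity {α : Type*} [MeasurableSpace α] {μ : Measure α} [SFinite μ]
    {f : α → ℝ} (hf : Measurable f) (hf₀ : ∀ x, 0 ≤ f x) {S : Set (α × α)} (hS : MeasurableSet S)
    (k : α × α → ℝ) :
    ∫ z in S, k z ∂((μ.withDensity fun x => ENNReal.ofReal (f x)).prod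
        (μ.withDensity fun x => ENNReal.ofReal (f x))) =
      ∫ z in S, f z.1 * f z.2 * k z ∂(μ.prod μ) := by
  rw [prod_withDensity hf.ennreal_ofReal hf.ennreal_ofReal,
    setIntegral_withDensity_eq_setIntegral_toReal_smul (by fun_prop)
      (.of_forall fun _ => by finiteness) k hS]
  simp only [ENNReal.toReal_mul, ENNReal.toReal_ofReal (hf₀ _), smul_eq_mul]

section Quantile

variable {Ω : Type*} [MeasurableSpace Ω] {P : Measure Ω} [IsProbabilityMeasure P] {Y : Ω → ℝ}

theorem strictMono_cdf (ν : Measure ℝ) [IsProbabilityMeasure ν] [ν.IsOpenPosMeasure] :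
    StrictMono (cdf ν) := by
  intro x y hxy
  have h := (isOpen_Ioo.measure_pos ν (nonempty_Ioo.2 hxy)).trans_le
    (measure_mono Ioo_subset_Ioc_self)
  rw [← measure_cdf ν, StieltjesFunction.measure_Ioc, ENNReal.ofReal_pos] at h
  linarith

theorem cdfOf_eq_cdf (hY : Measurable Y) : cdfOf P Y = cdf (P.map Y) := by
  have := Measure.isProbabilityMeasure_map (μ := P) hY.aemeasurable
  ext x
  rw [cdf_eq_real, measureReal_def, Measure.map_apply hY measurableSet_Iic]
  rfl

theorem exists_quantileOf_eq (hY : Measurable Y) [(P.map Y).IsOpenPosMeasure] {a b : ℝ}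
    (hab : a < b) :
    ∃ p q, 0 < p ∧ p < q ∧ q < 1 ∧ quantileOf P Y p = a ∧ quantileOf P Y q = b := by
  have := Measure.isProbabilityMeasure_map (μ := P) hY.aemeasurable
  have hmono : StrictMono (cdfOf P Y) := by rw [cdfOf_eq_cdf hY]; exact strictMono_cdf _
  have hinv := Function.leftInverse_invFun hmono.injective
  refine ⟨cdfOf P Y a, cdfOf P Y b, ?_, hmono hab, ?_, hinv a, hinv b⟩ <;> rw [cdfOf_eq_cdf hY]
  · exact (cdf_nonneg _ _).trans_lt (strictMono_cdf _ (sub_one_lt a))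
  · exact (strictMono_cdf _ (lt_add_one b)).trans_le (cdf_le_one _ _)

end Quantile

theorem isOpenPosMeasure_withDensity_ofReal {α : Type*} [TopologicalSpace α] [MeasurableSpace α]
    {μ : Measure α} [μ.IsOpenPosMeasure] {f : α → ℝ} (hf : Measurable f) (hpos : ∀ x, 0 < f x) :
    (μ.withDensity fun x => ENNReal.ofReal (f x)).IsOpenPosMeasure :=
  (withDensity_absolutelyContinuous' hf.ennreal_ofReal.aemeasurable
    (.of_forall fun x => (ENNReal.ofReal_pos.2 (hpos x)).ne')).isOpenPosMeasure

theorem isOpenPosMeasure_map_comp {Ω α β : Type*} [MeasurableSpace Ω] [TopologicalSpace α]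
    [MeasurableSpace α] [OpensMeasurableSpace α] [TopologicalSpace β] [MeasurableSpace β]
    [BorelSpace β] {P : Measure Ω} {X : Ω → α} (hX : Measurable X) [(P.map X).IsOpenPosMeasure]
    {π : α → β} (hπ : Continuous π) (hsurj : Function.Surjective π) :
    (P.map fun ω => π (X ω)).IsOpenPosMeasure := by
  rw [← Function.comp_def, ← Measure.map_map hπ.measurable hX]
  exact hπ.isOpenPosMeasure_map hsurj

local notation "ℝ³" => ℝ × ℝ × ℝ

-- Instance search gives up on this nested product (size limit), so it is supplied by hand.
instance : (volume : Measure (ℝ³ × ℝ³)).IsOpenPosMeasure := Measure.prod.instIsOpenPosMeasure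

def fourTerm (f : ℝ³ → ℝ) (x y : ℝ³) : ℝ :=
  f x * f y - f (x.1, y.2.1, x.2.2) * f (y.1, x.2.1, y.2.2) +
    f (x.1, x.2.1, y.2.2) * f (y.1, y.2.1, x.2.2) - f (x.1, y.2.1, y.2.2) * f (y.1, x.2.1, x.2.2)

def covKernel (f : ℝ³ → ℝ) (z : ℝ³ × ℝ³) : ℝ :=
  (z.1.1 - z.2.1) * (z.1.2.1 - z.2.2.1) * (f z.1 * f z.2)

def fourTermKernel (f : ℝ³ → ℝ) (z : ℝ³ × ℝ³) : ℝ :=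
  (z.1.1 - z.2.1) * (z.1.2.1 - z.2.2.1) * fourTerm f z.1 z.2

-- `swapᵢ (x, y)` exchanges the `i`-th coordinates of `x` and `y`.
def swap₁ : ℝ³ × ℝ³ → ℝ³ × ℝ³ := pairMap Prod.swap id
def swap₂ : ℝ³ × ℝ³ → ℝ³ × ℝ³ := pairMap id (pairMap Prod.swap id)
def swap₃ : ℝ³ × ℝ³ → ℝ³ × ℝ³ := pairMap id (pairMap id Prod.swap)

theorem measurePreserving_swap₁ : MeasurePreserving swap₁ volume volume :=
  Measure.measurePreserving_swap.pairMap (.id _)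

theorem measurePreserving_swap₂ : MeasurePreserving swap₂ volume volume :=
  (MeasurePreserving.id _).pairMap (Measure.measurePreserving_swap.pairMap (.id _))

theorem measurePreserving_swap₃ : MeasurePreserving swap₃ volume volume :=
  (MeasurePreserving.id _).pairMap ((MeasurePreserving.id _).pairMap Measure.measurePreserving_swap)

theorem involutive_swap₁ : Function.Involutive swap₁ := fun _ => rfl
theorem involutive_swap₂ : Function.Involutive swap₂ := fun _ => rfl
theorem involutive_swap₃ : Function.Involutive swap₃ := fun _ => rfl

theorem fourTermKernel_swap₁ (f : ℝ³ → ℝ) (z : ℝ³ × ℝ³) :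
    fourTermKernel f (swap₁ z) = fourTermKernel f z := by
  simp only [fourTermKernel, fourTerm, swap₁, pairMap, Prod.swap, id]; ring

theorem fourTermKernel_swap₂ (f : ℝ³ → ℝ) (z : ℝ³ × ℝ³) :
    fourTermKernel f (swap₂ z) = fourTermKernel f z := by
  simp only [fourTermKernel, fourTerm, swap₂, pairMap, Prod.swap, id]; ring

theorem fourTermKernel_swap₃ (f : ℝ³ → ℝ) (z : ℝ³ × ℝ³) :
    fourTermKernel f (swap₃ z) = fourTermKernel f z := by
  simp only [fourTermKernel, fourTerm, swap₃, pairMap, Prod.swap, id]; ring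

theorem two_mul_fourTermKernel (f : ℝ³ → ℝ) (z : ℝ³ × ℝ³) :
    2 * fourTermKernel f z =
      symmetrize swap₃ (symmetrize swap₂ (symmetrize swap₁ (covKernel f))) z := by
  simp only [symmetrize, fourTermKernel, fourTerm, covKernel, swap₁, swap₂, swap₃, pairMap,
    Prod.swap, id]
  ring

-- Half-open intervals, so that splitting an interval splits the box into a disjoint union.
def pairBox (lo hi : ℝ³ × ℝ³) : Set (ℝ³ × ℝ³) :=
  (Ioc lo.1.1 hi.1.1 ×ˢ Ioc lo.1.2.1 hi.1.2.1 ×ˢ Ioc lo.1.2.2 hi.1.2.2) ×ˢ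
    (Ioc lo.2.1 hi.2.1 ×ˢ Ioc lo.2.2.1 hi.2.2.1 ×ˢ Ioc lo.2.2.2 hi.2.2.2)

theorem measurableSet_pairBox (lo hi : ℝ³ × ℝ³) : MeasurableSet (pairBox lo hi) := by
  unfold pairBox; measurability

theorem pairBox_subset_Icc (lo hi : ℝ³ × ℝ³) : pairBox lo hi ⊆ Icc lo hi := by
  simp only [pairBox, Icc_prod_eq]
  gcongr <;> exact Ioc_subset_Icc_self

theorem pairBox_ae_eq_Icc (lo hi : ℝ³ × ℝ³) : pairBox lo hi =ᵐ[volume] Icc lo hi := by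
  simp only [pairBox, Icc_prod_eq]
  exact Measure.set_prod_ae_eq
    (Measure.set_prod_ae_eq Ioc_ae_eq_Icc (Measure.set_prod_ae_eq Ioc_ae_eq_Icc Ioc_ae_eq_Icc))
    (Measure.set_prod_ae_eq Ioc_ae_eq_Icc (Measure.set_prod_ae_eq Ioc_ae_eq_Icc Ioc_ae_eq_Icc))

theorem Continuous.integrableOn_pairBox {g : ℝ³ × ℝ³ → ℝ} (hg : Continuous g) (lo hi : ℝ³ × ℝ³) :
    IntegrableOn g (pairBox lo hi) :=
  (hg.continuousOn.integrableOn_compact isCompact_Icc).mono_set (pairBox_subset_Icc lo hi)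

theorem preimage_swap₁_pairBox (lo hi : ℝ³ × ℝ³) :
    swap₁ ⁻¹' pairBox lo hi = pairBox (swap₁ lo) (swap₁ hi) := by
  ext; simp only [pairBox, swap₁, pairMap, Prod.swap, id, mem_preimage, mem_prod, mem_Ioc]; tauto

theorem preimage_swap₂_pairBox (lo hi : ℝ³ × ℝ³) :
    swap₂ ⁻¹' pairBox lo hi = pairBox (swap₂ lo) (swap₂ hi) := by
  ext; simp only [pairBox, swap₂, pairMap, Prod.swap, id, mem_preimage, mem_prod, mem_Ioc]; tauto

theorem preimage_swap₃_pairBox (lo hi : ℝ³ × ℝ³) :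
    swap₃ ⁻¹' pairBox lo hi = pairBox (swap₃ lo) (swap₃ hi) := by
  ext; simp only [pairBox, swap₃, pairMap, Prod.swap, id, mem_preimage, mem_prod, mem_Ioc]; tauto

section FourTermIntegral

variable {f : ℝ³ → ℝ}

noncomputable def fourTermIntegral (f : ℝ³ → ℝ) (lo hi : ℝ³ × ℝ³) : ℝ :=
  ∫ z in pairBox lo hi, fourTermKernel f z

theorem fourTermIntegral_swap₁ (lo hi : ℝ³ × ℝ³) :
    fourTermIntegral f (swap₁ lo) (swap₁ hi) = fourTermIntegral f lo hi := by
  rw [fourTermIntegral, ← preimage_swap₁_pairBox,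
    measurePreserving_swap₁.setIntegral_preimage_of_invariant involutive_swap₁
      (fourTermKernel_swap₁ f), fourTermIntegral]

theorem fourTermIntegral_swap₂ (lo hi : ℝ³ × ℝ³) :
    fourTermIntegral f (swap₂ lo) (swap₂ hi) = fourTermIntegral f lo hi := by
  rw [fourTermIntegral, ← preimage_swap₂_pairBox,
    measurePreserving_swap₂.setIntegral_preimage_of_invariant involutive_swap₂
      (fourTermKernel_swap₂ f), fourTermIntegral]

theorem fourTermIntegral_swap₃ (lo hi : ℝ³ × ℝ³) :
    fourTermIntegral f (swap₃ lo) (swap₃ hi) = fourTermIntegral f lo hi := by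
  rw [fourTermIntegral, ← preimage_swap₃_pairBox,
    measurePreserving_swap₃.setIntegral_preimage_of_invariant involutive_swap₃
      (fourTermKernel_swap₃ f), fourTermIntegral]

variable (hf : Continuous f)
include hf

theorem continuous_fourTermKernel : Continuous (fourTermKernel f) := by
  unfold fourTermKernel fourTerm; fun_prop

theorem continuous_covKernel : Continuous (covKernel f) := by
  unfold covKernel; fun_prop

theorem fourTermIntegral_union {lo hi lo' hi' lo'' hi'' : ℝ³ × ℝ³}
    (hunion : pairBox lo hi = pairBox lo' hi' ∪ pairBox lo'' hi'')
    (hdisj : Disjoint (pairBox lo' hi') (pairBox lo'' hi'')) :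
    fourTermIntegral f lo hi = fourTermIntegral f lo' hi' + fourTermIntegral f lo'' hi'' := by
  rw [fourTermIntegral, hunion, setIntegral_union hdisj (measurableSet_pairBox _ _)
    ((continuous_fourTermKernel hf).integrableOn_pairBox _ _)
    ((continuous_fourTermKernel hf).integrableOn_pairBox _ _)]
  rfl

theorem fourTermIntegral_split₁ {a m b : ℝ} (ham : a ≤ m) (hmb : m ≤ b) (p q : ℝ × ℝ)
    (y₀ y₁ : ℝ³) :
    fourTermIntegral f ((a, p), y₀) ((b, q), y₁) =
      fourTermIntegral f ((a, p), y₀) ((m, q), y₁) + fourTermIntegral f ((m, p), y₀) ((b, q), y₁) :=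
  fourTermIntegral_union hf
    (by simp only [pairBox, ← Ioc_union_Ioc_eq_Ioc ham hmb, union_prod])
    (disjoint_prod.2 (.inl (disjoint_prod.2 (.inl (Ioc_disjoint_Ioc_of_le le_rfl)))))

theorem fourTermIntegral_split₂ {c m d : ℝ} (hcm : c ≤ m) (hmd : m ≤ d) (a b e g : ℝ)
    (y₀ y₁ : ℝ³) :
    fourTermIntegral f ((a, c, e), y₀) ((b, d, g), y₁) =
      fourTermIntegral f ((a, c, e), y₀) ((b, m, g), y₁) +
        fourTermIntegral f ((a, m, e), y₀) ((b, d, g), y₁) :=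
  fourTermIntegral_union hf
    (by simp only [pairBox, ← Ioc_union_Ioc_eq_Ioc hcm hmd, union_prod, prod_union])
    (disjoint_prod.2 (.inl (disjoint_prod.2
      (.inr (disjoint_prod.2 (.inl (Ioc_disjoint_Ioc_of_le le_rfl)))))))

theorem fourTermIntegral_split₃ {e m g : ℝ} (hem : e ≤ m) (hmg : m ≤ g) (a b c d : ℝ)
    (y₀ y₁ : ℝ³) :
    fourTermIntegral f ((a, c, e), y₀) ((b, d, g), y₁) =
      fourTermIntegral f ((a, c, e), y₀) ((b, d, m), y₁) +
        fourTermIntegral f ((a, c, m), y₀) ((b, d, g), y₁) :=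
  fourTermIntegral_union hf
    (by simp only [pairBox, ← Ioc_union_Ioc_eq_Ioc hem hmg, union_prod, prod_union])
    (disjoint_prod.2 (.inl (disjoint_prod.2
      (.inr (disjoint_prod.2 (.inr (Ioc_disjoint_Ioc_of_le le_rfl)))))))

end FourTermIntegral

section Vanishing

variable {f : ℝ³ → ℝ} (hf : Continuous f)
include hf

theorem fourTermIntegral_diag (p q : ℝ³) :
    fourTermIntegral f (p, p) (q, q) = 4 * ∫ z in pairBox (p, p) (q, q), covKernel f z := by
  have hK := (continuous_covKernel hf).integrableOn_pairBox (p, p) (q, q)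
  have hs₁ := preimage_swap₁_pairBox (p, p) (q, q)
  have hs₂ := preimage_swap₂_pairBox (p, p) (q, q)
  have hs₃ := preimage_swap₃_pairBox (p, p) (q, q)
  have hK₁ := measurePreserving_swap₁.integrableOn_symmetrize involutive_swap₁ hs₁ hK
  have hK₂ := measurePreserving_swap₂.integrableOn_symmetrize involutive_swap₂ hs₂ hK₁
  have h : 2 * fourTermIntegral f (p, p) (q, q) =
      8 * ∫ z in pairBox (p, p) (q, q), covKernel f z := by
    rw [fourTermIntegral, ← integral_const_mul]
    simp_rw [two_mul_fourTermKernel]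
    rw [measurePreserving_swap₃.setIntegral_symmetrize involutive_swap₃ hs₃ hK₂,
      measurePreserving_swap₂.setIntegral_symmetrize involutive_swap₂ hs₂ hK₁,
      measurePreserving_swap₁.setIntegral_symmetrize involutive_swap₁ hs₁ hK]
    ring
  linarith

variable (hcov : ∀ p q : ℝ³, p.1 < q.1 → p.2.1 < q.2.1 → p.2.2 < q.2.2 →
  ∫ z in Icc p q ×ˢ Icc p q, covKernel f z = 0)
include hcov

theorem fourTermIntegral_eq_zero_of_lt_of_eq_of_eq {a₁ a₂ b₁ b₂ c d e g : ℝ} (ha₁ : a₁ < a₂)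
    (ha₂ : a₂ < b₁) (ha₃ : b₁ < b₂) (hcd : c < d) (heg : e < g) :
    fourTermIntegral f ((a₁, c, e), (b₁, c, e)) ((a₂, d, g), (b₂, d, g)) = 0 := by
  refine eq_zero_of_symm_of_add_of_diag (φ := fun a b a' b' =>
    fourTermIntegral f ((a, c, e), (a', c, e)) ((b, d, g), (b', d, g)))
    (fun _ _ _ _ => (fourTermIntegral_swap₁ _ _).symm)
    (fun _ _ _ _ _ ham hmb => fourTermIntegral_split₁ hf ham.le hmb.le _ _ _ _)
    (fun _ _ hab => ?_) ha₁ ha₂ ha₃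
  rw [fourTermIntegral_diag hf, setIntegral_congr_set (pairBox_ae_eq_Icc _ _), ← Icc_prod_Icc,
    hcov _ _ hab hcd heg, mul_zero]

theorem fourTermIntegral_eq_zero_of_lt_of_lt_of_eq {a₁ a₂ b₁ b₂ c₁ c₂ d₁ d₂ e g : ℝ}
    (ha₁ : a₁ < a₂) (ha₂ : a₂ < b₁) (ha₃ : b₁ < b₂) (hc₁ : c₁ < c₂) (hc₂ : c₂ < d₁)
    (hc₃ : d₁ < d₂) (heg : e < g) :
    fourTermIntegral f ((a₁, c₁, e), (b₁, d₁, e)) ((a₂, c₂, g), (b₂, d₂, g)) = 0 :=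
  eq_zero_of_symm_of_add_of_diag (φ := fun c d c' d' =>
    fourTermIntegral f ((a₁, c, e), (b₁, c', e)) ((a₂, d, g), (b₂, d', g)))
    (fun _ _ _ _ => (fourTermIntegral_swap₂ _ _).symm)
    (fun _ _ _ _ _ hcm hmd => fourTermIntegral_split₂ hf hcm.le hmd.le _ _ _ _ _ _)
    (fun _ _ hcd => fourTermIntegral_eq_zero_of_lt_of_eq_of_eq hf hcov ha₁ ha₂ ha₃ hcd heg)
    hc₁ hc₂ hc₃

theorem fourTermIntegral_eq_zero_of_lt_of_lt_of_lt {a₁ a₂ b₁ b₂ c₁ c₂ d₁ d₂ e₁ e₂ g₁ g₂ : ℝ}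
    (ha₁ : a₁ < a₂) (ha₂ : a₂ < b₁) (ha₃ : b₁ < b₂) (hc₁ : c₁ < c₂) (hc₂ : c₂ < d₁)
    (hc₃ : d₁ < d₂) (he₁ : e₁ < e₂) (he₂ : e₂ < g₁) (he₃ : g₁ < g₂) :
    fourTermIntegral f ((a₁, c₁, e₁), (b₁, d₁, g₁)) ((a₂, c₂, e₂), (b₂, d₂, g₂)) = 0 :=
  eq_zero_of_symm_of_add_of_diag (φ := fun e g e' g' =>
    fourTermIntegral f ((a₁, c₁, e), (b₁, d₁, e')) ((a₂, c₂, g), (b₂, d₂, g')))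
    (fun _ _ _ _ => (fourTermIntegral_swap₃ _ _).symm)
    (fun _ _ _ _ _ hem hmg => fourTermIntegral_split₃ hf hem.le hmg.le _ _ _ _ _ _)
    (fun _ _ heg => fourTermIntegral_eq_zero_of_lt_of_lt_of_eq hf hcov ha₁ ha₂ ha₃ hc₁ hc₂ hc₃ heg)
    he₁ he₂ he₃

theorem fourTermKernel_eq_zero {x₁ x₂ x₃ y₁ y₂ y₃ : ℝ} (h₁ : x₁ < y₁) (h₂ : x₂ < y₂)
    (h₃ : x₃ ≤ y₃) : fourTermKernel f ((x₁, x₂, x₃), (y₁, y₂, y₃)) = 0 := by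
  refine eq_zero_of_setIntegral_closedBall_eq_zero (μ := volume) (continuous_fourTermKernel hf) ?_
  simp only [← closedBall_prod_same, Real.closedBall_eq_Icc, Icc_prod_Icc,
    ← setIntegral_congr_set (pairBox_ae_eq_Icc _ _)]
  rcases h₃.lt_or_eq with h₃ | rfl
  · filter_upwards [Ioo_mem_nhdsGT (half_pos (sub_pos.2 h₁)),
      Ioo_mem_nhdsGT (half_pos (sub_pos.2 h₂)), Ioo_mem_nhdsGT (half_pos (sub_pos.2 h₃))]
      with ε ⟨hε, hε₁⟩ ⟨_, hε₂⟩ ⟨_, hε₃⟩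
    exact fourTermIntegral_eq_zero_of_lt_of_lt_of_lt hf hcov (by linarith) (by linarith)
      (by linarith) (by linarith) (by linarith) (by linarith) (by linarith) (by linarith)
      (by linarith)
  · filter_upwards [Ioo_mem_nhdsGT (half_pos (sub_pos.2 h₁)),
      Ioo_mem_nhdsGT (half_pos (sub_pos.2 h₂))] with ε ⟨hε, hε₁⟩ ⟨_, hε₂⟩
    exact fourTermIntegral_eq_zero_of_lt_of_lt_of_eq hf hcov (by linarith) (by linarith)
      (by linarith) (by linarith) (by linarith) (by linarith) (by linarith)

theorem fourTerm_eq_zero (x y : ℝ³) : fourTerm f x y = 0 := by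
  obtain ⟨x₁, x₂, x₃⟩ := x
  obtain ⟨y₁, y₂, y₃⟩ := y
  wlog h₃ : x₃ ≤ y₃ generalizing x₃ y₃
  · have h := this y₃ x₃ (le_of_not_ge h₃)
    simp only [fourTerm] at h ⊢
    linear_combination h
  wlog h₁ : x₁ ≤ y₁ generalizing x₁ y₁
  · have h := this y₁ x₁ (le_of_not_ge h₁)
    simp only [fourTerm] at h ⊢
    linear_combination -h
  wlog h₂ : x₂ ≤ y₂ generalizing x₂ y₂
  · have h := this y₂ x₂ (le_of_not_ge h₂)
    simp only [fourTerm] at h ⊢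
    linear_combination -h
  rcases h₁.lt_or_eq with h₁ | rfl
  · rcases h₂.lt_or_eq with h₂ | rfl
    · exact (mul_eq_zero.1 (fourTermKernel_eq_zero hf hcov h₁ h₂ h₃)).resolve_left
        (mul_ne_zero (sub_ne_zero.2 h₁.ne) (sub_ne_zero.2 h₂.ne))
    · simp only [fourTerm]; ring
  · simp only [fourTerm]; ring

end Vanishing

theorem setIntegral_covKernel_eq_condCov {f : ℝ³ → ℝ} (hf : Continuous f) (hf₀ : ∀ x, 0 ≤ f x)
    [IsFiniteMeasure (volume.withDensity fun x => ENNReal.ofReal (f x))] {B : Set ℝ³}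
    (hB : IsCompact B) :
    ∫ z in B ×ˢ B, covKernel f z =
      2 * (volume.withDensity fun x => ENNReal.ofReal (f x)).real B ^ 2 *
        condCov (volume.withDensity fun x => ENNReal.ofReal (f x)) B Prod.fst (fun x => x.2.1) := by
  rw [← setIntegral_prod_sub_mul_sub (continuous_fst.continuousOn.integrableOn_compact hB)
    ((continuous_snd.fst).continuousOn.integrableOn_compact hB)
    ((continuous_fst.mul continuous_snd.fst).continuousOn.integrableOn_compact hB),
    setIntegral_prod_withDensity hf.measurable hf₀ (hB.measurableSet.prod hB.measurableSet)]
  congr 1 with z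
  simp only [covKernel]
  ring

theorem preimage_prodMk_Icc {Ω : Type*} (X₁ X₂ X₃ : Ω → ℝ) (p q : ℝ³) :
    (fun ω => (X₁ ω, X₂ ω, X₃ ω)) ⁻¹' Icc p q =
      {ω | p.1 ≤ X₁ ω ∧ X₁ ω ≤ q.1} ∩ {ω | p.2.1 ≤ X₂ ω ∧ X₂ ω ≤ q.2.1} ∩
        {ω | p.2.2 ≤ X₃ ω ∧ X₃ ω ≤ q.2.2} := by
  ext ω
  simp only [mem_preimage, mem_Icc, Prod.le_def, mem_inter_iff, mem_ofPred_eq]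
  tauto

/-- Three-dimensional step of the multivariate theorem: if `(X₁,X₂,X₃)` has a jointly
continuous, strictly positive density `f` on `ℝ³` and `Cov_A[X₁,X₂] = 0` on every quantile
box `A`, then `f` satisfies the four-term cross-product identity. -/
theorem density_four_term_identity_of_condCov_eq_zero
    {Ω : Type*} [MeasurableSpace Ω] (P : Measure Ω) [IsProbabilityMeasure P]
    (X₁ X₂ X₃ : Ω → ℝ) (hX₁ : Measurable X₁) (hX₂ : Measurable X₂) (hX₃ : Measurable X₃)
    (f : ℝ × ℝ × ℝ → ℝ) (hf_cont : Continuous f) (hf_pos : ∀ x, 0 < f x)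
    (hf_law : Measure.map (fun ω => (X₁ ω, X₂ ω, X₃ ω)) P =
      (volume : Measure (ℝ × ℝ × ℝ)).withDensity (fun x => ENNReal.ofReal (f x)))
    (hcov : ∀ p₁ q₁ p₂ q₂ p₃ q₃ : ℝ,
      0 < p₁ → p₁ < q₁ → q₁ < 1 → 0 < p₂ → p₂ < q₂ → q₂ < 1 → 0 < p₃ → p₃ < q₃ → q₃ < 1 →
      condCov P
        ({ω | quantileOf P X₁ p₁ ≤ X₁ ω ∧ X₁ ω ≤ quantileOf P X₁ q₁} ∩
          {ω | quantileOf P X₂ p₂ ≤ X₂ ω ∧ X₂ ω ≤ quantileOf P X₂ q₂} ∩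
          {ω | quantileOf P X₃ p₃ ≤ X₃ ω ∧ X₃ ω ≤ quantileOf P X₃ q₃})
        X₁ X₂ = 0) :
    ∀ x₁ x₂ x₃ y₁ y₂ y₃ : ℝ,
      f (x₁, x₂, x₃) * f (y₁, y₂, y₃) - f (x₁, y₂, x₃) * f (y₁, x₂, y₃) +
        f (x₁, x₂, y₃) * f (y₁, y₂, x₃) - f (x₁, y₂, y₃) * f (y₁, x₂, x₃) = 0 := by
  have hX : Measurable fun ω => (X₁ ω, X₂ ω, X₃ ω) := hX₁.prodMk (hX₂.prodMk hX₃)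
  have : (P.map fun ω => (X₁ ω, X₂ ω, X₃ ω)).IsOpenPosMeasure :=
    hf_law ▸ isOpenPosMeasure_withDensity_ofReal hf_cont.measurable hf_pos
  have : IsProbabilityMeasure (volume.withDensity fun x => ENNReal.ofReal (f x)) :=
    hf_law ▸ Measure.isProbabilityMeasure_map hX.aemeasurable
  have : (P.map X₁).IsOpenPosMeasure := isOpenPosMeasure_map_comp hX continuous_fst
    Prod.fst_surjective
  have : (P.map X₂).IsOpenPosMeasure := isOpenPosMeasure_map_comp hX continuous_snd.fst
    fun a => ⟨(0, a, 0), rfl⟩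
  have : (P.map X₃).IsOpenPosMeasure := isOpenPosMeasure_map_comp hX continuous_snd.snd
    fun a => ⟨(0, 0, a), rfl⟩
  refine fun x₁ x₂ x₃ y₁ y₂ y₃ =>
    fourTerm_eq_zero hf_cont (fun p q h₁ h₂ h₃ => ?_) (x₁, x₂, x₃) (y₁, y₂, y₃)
  obtain ⟨p₁, q₁, hp₁, hpq₁, hq₁, hp₁', hq₁'⟩ := exists_quantileOf_eq (P := P) hX₁ h₁
  obtain ⟨p₂, q₂, hp₂, hpq₂, hq₂, hp₂', hq₂'⟩ := exists_quantileOf_eq (P := P) hX₂ h₂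
  obtain ⟨p₃, q₃, hp₃, hpq₃, hq₃, hp₃', hq₃'⟩ := exists_quantileOf_eq (P := P) hX₃ h₃
  have h := hcov p₁ q₁ p₂ q₂ p₃ q₃ hp₁ hpq₁ hq₁ hp₂ hpq₂ hq₂ hp₃ hpq₃ hq₃
  rw [hp₁', hq₁', hp₂', hq₂', hp₃', hq₃'] at h
  have hlaw := condCov_preimage (P := P) hX measurableSet_Icc measurable_fst measurable_snd.fst
    (B := Icc p q)
  rw [hf_law, preimage_prodMk_Icc] at hlaw
  rw [setIntegral_covKernel_eq_condCov hf_cont (fun x => (hf_pos x).le) isCompact_Icc, ← hlaw]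
  exact mul_eq_zero_of_right _ h
end
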